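/- arXiv:1207.2888 — 2 statements merged into one kernel-verified Lean document; each statement's English description precedes it below -/
import Mathlib

section
/- Let E be a generalized pseudoeffect algebra. Then: (i) {π_c : c ∈ Γ(E)} is a sublattice of the boolean algebra ΓEX(E), and as such is a generalized boolean algebra; (ii) Γ(E) is a commutative lattice-ordered sub-GPEA of E; (iii) the mapping c ↦ π_c from Γ(E) onto {π_c : c ∈ Γ(E)} is a lattice isomorphism; (iv) Γ(E) is a generalized boolean algebra, i.e., a distributive and relatively complemented lattice with smallest element 0; (v) E is a pseudoeffect algebra (has a greatest element) iff {π_c : c ∈ Γ(E)} = ΓEX(E). -/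
/- Common framework: generalized pseudoeffect algebras (GPEAs), after
   Foulis, Pulmannová, Vinceková, "The exocenter and type decompositions for
   generalized pseudoeffect algebras".
   A partial binary operation ⊕ is represented by its graph
   `R : E → E → E → Prop`, where `R a b s` means "a ⊕ b is defined and equals s". -/

universe u v

namespace GPEApaper

/-- Raw data of a partial algebra: the graph of a partial binary operation
together with a zero element. -/
structure PartialAlg (E : Type u) where
  R : E → E → E → Prop
  zero : E

namespace PartialAlg

variable {E : Type u} (A : PartialAlg E)

/-- The axioms (GPEA1)–(GPEA5) of a generalized pseudoeffect algebra,
including the functionality (well-definedness) of the partial operation. -/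
def IsGPEA : Prop :=
  -- ⊕ is a partial operation (single-valued)
  (∀ a b c d : E, A.R a b c → A.R a b d → c = d) ∧
  -- (GPEA1) associativity, both directions
  (∀ a b c ab abc : E, A.R a b ab → A.R ab c abc → ∃ bc, A.R b c bc ∧ A.R a bc abc) ∧
  (∀ a b c bc abc : E, A.R b c bc → A.R a bc abc → ∃ ab, A.R a b ab ∧ A.R ab c abc) ∧
  -- (GPEA2) conjugacy
  (∀ a b s : E, A.R a b s → (∃ d, A.R d a s) ∧ (∃ e, A.R b e s)) ∧
  -- (GPEA3) cancellation
  (∀ a b c s : E, A.R a b s → A.R a c s → b = c) ∧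
  (∀ a b c s : E, A.R b a s → A.R c a s → b = c) ∧
  -- (GPEA4) positivity
  (∀ a b : E, A.R a b A.zero → a = A.zero ∧ b = A.zero) ∧
  -- (GPEA5) zero element
  (∀ a : E, A.R a A.zero a ∧ A.R A.zero a a)

/-- a ⊕ b is defined. -/
def Defined (a b : E) : Prop := ∃ s, A.R a b s

/-- The induced partial order: a ≤ b iff a ⊕ x = b for some x. -/
def le (a b : E) : Prop := ∃ x, A.R a x b

/-- Orthogonality: p ⊥ q iff p ⊕ q and q ⊕ p both exist and are equal. -/
def perp (a b : E) : Prop := ∃ s, A.R a b s ∧ A.R b a s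

/-- b is an upper bound of the set S. -/
def IsUB (S : Set E) (b : E) : Prop := ∀ a ∈ S, A.le a b

/-- s is the supremum (least upper bound) of the set S in (E, ≤). -/
def IsSup (S : Set E) (s : E) : Prop := A.IsUB S s ∧ ∀ b, A.IsUB S b → A.le s b

/-- s is the infimum (greatest lower bound) of the set S in (E, ≤). -/
def IsInf (S : Set E) (s : E) : Prop :=
  (∀ a ∈ S, A.le s a) ∧ ∀ b, (∀ a ∈ S, A.le b a) → A.le b s

/-- An ideal of a GPEA. -/
def IsIdeal (I : Set E) : Prop :=
  I.Nonempty ∧ (∀ a ∈ I, ∀ b, A.le b a → b ∈ I) ∧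
    ∀ a ∈ I, ∀ b ∈ I, ∀ s, A.R a b s → s ∈ I

/-- E = S ⊕ S′ : S and S′ are ideals, elements of S are orthogonal to elements
of S′, and every element of E has a unique decomposition a = a₁ ⊕ a₂ with
a₁ ∈ S, a₂ ∈ S′. -/
def IsDirectSum (S S' : Set E) : Prop :=
  A.IsIdeal S ∧ A.IsIdeal S' ∧ (∀ a ∈ S, ∀ b ∈ S', A.perp a b) ∧
    ∀ a : E, ∃! p : E × E, p.1 ∈ S ∧ p.2 ∈ S' ∧ A.R p.1 p.2 a

/-- A central ideal (direct summand). -/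
def IsCentralIdeal (S : Set E) : Prop := ∃ S', A.IsDirectSum S S'

/-- A normal ideal. -/
def IsNormalIdeal (I : Set E) : Prop :=
  A.IsIdeal I ∧ ∀ a x y s : E, A.R a x s → A.R y a s → (x ∈ I ↔ y ∈ I)

/-- The axioms (EXC1)–(EXC4): π belongs to the exocenter ΓEX(E). -/
def IsExo (π : E → E) : Prop :=
  (∀ e f s, A.R e f s → A.R (π e) (π f) (π s)) ∧
  (∀ e, π (π e) = π e) ∧
  (∀ e, A.le (π e) e) ∧
  (∀ e f, π e = e → π f = A.zero → A.perp e f)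

/-- For a ≤ b, `A.rdiv a b` is the element a/b, i.e. the unique x with
a ⊕ x = b (chosen by Hilbert choice when it exists). -/
noncomputable def rdiv (a b : E) : E :=
  letI : Nonempty E := ⟨A.zero⟩
  Classical.epsilon fun x => A.R a x b

/-- For π in the exocenter, π′ e := (π e)/e. -/
noncomputable def exoCompl (π : E → E) : E → E := fun e => A.rdiv (π e) e

/-- The order on the exocenter: ξ ≤ π iff ξ = ξ ∘ π. -/
def exoLe (_A : PartialAlg E) (ξ π : E → E) : Prop := ξ = ξ ∘ π

/-- Disjointness in the boolean algebra ΓEX(E): the meet (= composition)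
of ξ and π is the zero map. -/
def exoDisjoint (ξ π : E → E) : Prop := ∀ e, ξ (π e) = A.zero

/-- The join in the boolean algebra ΓEX(E): π ∨ ξ = (π′ ∘ ξ′)′. -/
noncomputable def exoSup (π ξ : E → E) : E → E :=
  A.exoCompl (A.exoCompl π ∘ A.exoCompl ξ)

/-- σ is the least upper bound of a set S of exocenter elements,
with respect to the order of the boolean algebra ΓEX(E). -/
def IsExoLUB (S : Set (E → E)) (σ : E → E) : Prop :=
  A.IsExo σ ∧ (∀ π ∈ S, A.exoLe π σ) ∧
    ∀ β, A.IsExo β → (∀ π ∈ S, A.exoLe π β) → A.exoLe σ β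

/-- A central element (C1)–(C4). -/
def Central (c : E) : Prop :=
  (∀ a : E, ∃ a₁ a₂, A.le a₁ c ∧ A.Defined a₂ c ∧ A.R a₁ a₂ a) ∧
  (∀ a b : E, A.le a c → A.Defined b c → A.perp a b) ∧
  (∀ a b s : E, A.le a c → A.le b c → A.R a b s → A.le s c) ∧
  (∀ a b ab : E, A.Defined a c → A.Defined b c → A.R a b ab → A.Defined ab c)

/-- `A.ListSumsTo [e₁, …, eₙ] s` : the orthosum e₁ ⊕ (e₂ ⊕ (⋯ ⊕ eₙ)) is
defined and equals s (empty orthosum is 0). -/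
def ListSumsTo (A : PartialAlg E) : List E → E → Prop
  | [], s => s = A.zero
  | a :: l, s => ∃ t, A.ListSumsTo l t ∧ A.R a t s

/-- The finite subfamily indexed by F is orthogonal with orthosum s:
every enumeration of F yields the orthosum s. -/
def FinsetSumsTo {ι : Type v} (e : ι → E) (F : Finset ι) (s : E) : Prop :=
  ∀ l : List ι, l.Nodup →
    (letI : DecidableEq ι := Classical.decEq ι; l.toFinset) = F →
    A.ListSumsTo (l.map e) s

/-- A family is orthogonal iff every finite subfamily is orthogonal
(all enumerations have a common orthosum). -/
def IsOrthogonal {ι : Type v} (e : ι → E) : Prop :=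
  ∀ F : Finset ι, ∃ s, A.FinsetSumsTo e F s

/-- A family is orthosummable with orthosum s iff it is orthogonal and s is
the supremum of its finite partial orthosums. -/
def IsOrthosum {ι : Type v} (e : ι → E) (s : E) : Prop :=
  A.IsOrthogonal e ∧ A.IsSup {t | ∃ F : Finset ι, A.FinsetSumsTo e F t} s

/-- A family (eᵢ) is ΓEX-orthogonal iff there is a pairwise disjoint family
(πᵢ) in the exocenter with πᵢ eᵢ = eᵢ for all i. -/
def GEXOrthogonal {ι : Type v} (e : ι → E) : Prop :=
  ∃ π : ι → E → E, (∀ i, A.IsExo (π i)) ∧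
    (∀ i j, i ≠ j → A.exoDisjoint (π i) (π j)) ∧ ∀ i, π i (e i) = e i

/-- E is centrally orthocomplete: (CO1) every ΓEX-orthogonal family is
orthosummable, and (CO2) orthosums respect one-sided summability. -/
def IsCOGPEA : Prop :=
  (∀ {ι : Type u} (e : ι → E), A.GEXOrthogonal e → ∃ s, A.IsOrthosum e s) ∧
  (∀ {ι : Type u} (e : ι → E) (s : E), A.GEXOrthogonal e → A.IsOrthosum e s →
    ∀ a : E, ((∀ i, A.Defined a (e i)) → A.Defined a s) ∧
             ((∀ i, A.Defined (e i) a) → A.Defined s a))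

/-- γ is the exocentral cover of e: the smallest element of ΓEX(E) fixing e. -/
def IsExoCover (e : E) (γ : E → E) : Prop :=
  A.IsExo γ ∧ γ e = e ∧ ∀ π, A.IsExo π → π e = e → A.exoLe γ π

/-- The restriction of the partial algebra to a subset containing 0 (with the
operation defined whenever it is defined in E and the result lies in the subset). -/
def restrictSet (S : Set E) (h0 : A.zero ∈ S) : PartialAlg S where
  R a b s := A.R a.1 b.1 s.1
  zero := ⟨A.zero, h0⟩

/-- The axioms (PEA1)–(PEA4) of a pseudoeffect algebra with unit `one`
(including single-valuedness of the partial operation). -/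
def IsPEA (one : E) : Prop :=
  (∀ a b c d : E, A.R a b c → A.R a b d → c = d) ∧
  -- (PEA1)
  (∀ a b c ab abc : E, A.R a b ab → A.R ab c abc → ∃ bc, A.R b c bc ∧ A.R a bc abc) ∧
  (∀ a b c bc abc : E, A.R b c bc → A.R a bc abc → ∃ ab, A.R a b ab ∧ A.R ab c abc) ∧
  -- (PEA2)
  (∀ a : E, ∃! d, A.R a d one) ∧
  (∀ a : E, ∃! e, A.R e a one) ∧
  -- (PEA3)
  (∀ a b s : E, A.R a b s → (∃ d, A.R d a s) ∧ (∃ e, A.R b e s)) ∧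
  -- (PEA4)
  (∀ a s : E, A.R one a s ∨ A.R a one s → a = A.zero)

end PartialAlg

end GPEApaper


/-! Every element of ΓEX(E) whose range is an interval E[0, m] makes m central: the axioms
(C1)–(C4) for m are read off from (EXC1)–(EXC4). So a central element can be manufactured by
exhibiting a suitable exocentral map, and the lattice operations on Γ(E) are computed in ΓEX(E):
the meet of c and d is π_c d, the top of π_c ∘ π_d; the relative complement of d in c is π_d′ c,
the top of π_d′ ∘ π_c; the join is c ⊕ π_c′ d, the top of π_d ∨ π_c = (π_d′ ∘ π_c′)′, whose
value at e is π_c e ⊕ π_d (π_c′ e). Distributivity and the relative complement laws are checked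
pointwise with these formulas, and c ↦ π_c carries the resulting structure to {π_c : c ∈ Γ(E)}. -/

namespace GPEApaper.PartialAlg

variable {E : Type u} {A : PartialAlg E}

namespace IsGPEA

variable {a b c d e f q r s t w x y x₁ x₂ y₁ y₂ ab bc abc : E}

theorem R_unique (hA : A.IsGPEA) (h₁ : A.R a b c) (h₂ : A.R a b d) : c = d :=
  hA.1 a b c d h₁ h₂

theorem assoc_right (hA : A.IsGPEA) (h₁ : A.R a b ab) (h₂ : A.R ab c abc) :
    ∃ bc, A.R b c bc ∧ A.R a bc abc :=
  hA.2.1 a b c ab abc h₁ h₂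

theorem assoc_left (hA : A.IsGPEA) (h₁ : A.R b c bc) (h₂ : A.R a bc abc) :
    ∃ ab, A.R a b ab ∧ A.R ab c abc :=
  hA.2.2.1 a b c bc abc h₁ h₂

theorem le_of_R_right (hA : A.IsGPEA) (h : A.R a b s) : A.le b s :=
  (hA.2.2.2.1 a b s h).2

theorem cancel_left (hA : A.IsGPEA) (h₁ : A.R a b s) (h₂ : A.R a c s) : b = c :=
  hA.2.2.2.2.1 a b c s h₁ h₂

theorem cancel_right (hA : A.IsGPEA) (h₁ : A.R b a s) (h₂ : A.R c a s) : b = c :=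
  hA.2.2.2.2.2.1 a b c s h₁ h₂

theorem eq_zero_of_R_zero (hA : A.IsGPEA) (h : A.R a b A.zero) : a = A.zero ∧ b = A.zero :=
  hA.2.2.2.2.2.2.1 a b h

theorem R_zero_right (hA : A.IsGPEA) (a : E) : A.R a A.zero a := (hA.2.2.2.2.2.2.2 a).1

theorem R_zero_left (hA : A.IsGPEA) (a : E) : A.R A.zero a a := (hA.2.2.2.2.2.2.2 a).2

theorem le_refl (hA : A.IsGPEA) (a : E) : A.le a a := ⟨A.zero, hA.R_zero_right a⟩

theorem le_trans (hA : A.IsGPEA) (h₁ : A.le a b) (h₂ : A.le b c) : A.le a c := by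
  obtain ⟨x, hx⟩ := h₁
  obtain ⟨y, hy⟩ := h₂
  obtain ⟨t, -, ht⟩ := hA.assoc_right hx hy
  exact ⟨t, ht⟩

theorem le_antisymm (hA : A.IsGPEA) (h₁ : A.le a b) (h₂ : A.le b a) : a = b := by
  obtain ⟨x, hx⟩ := h₁
  obtain ⟨y, hy⟩ := h₂
  obtain ⟨t, hxy, hat⟩ := hA.assoc_right hx hy
  rw [hA.cancel_left hat (hA.R_zero_right a)] at hxy
  rw [(hA.eq_zero_of_R_zero hxy).1] at hx
  exact hA.R_unique (hA.R_zero_right a) hx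

theorem zero_le (hA : A.IsGPEA) (a : E) : A.le A.zero a := ⟨a, hA.R_zero_left a⟩

theorem eq_zero_of_le_zero (hA : A.IsGPEA) (h : A.le a A.zero) : a = A.zero := by
  obtain ⟨x, hx⟩ := h
  exact (hA.eq_zero_of_R_zero hx).1

theorem interchange (hA : A.IsGPEA) (h₁ : A.R x₁ x₂ x) (h₂ : A.R y₁ y₂ y) (h : A.R x y s)
    (hperp : A.perp x₂ y₁) : ∃ z w, A.R x₁ y₁ z ∧ A.R x₂ y₂ w ∧ A.R z w s := by
  obtain ⟨t, hx₂y, hx₁t⟩ := hA.assoc_right h₁ h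
  obtain ⟨u, hx₂y₁, hut⟩ := hA.assoc_left h₂ hx₂y
  obtain ⟨v, hv, hy₁x₂⟩ := hperp
  rw [hA.R_unique hx₂y₁ hv] at hut
  obtain ⟨w, hw, hy₁w⟩ := hA.assoc_right hy₁x₂ hut
  obtain ⟨z, hz, hzw⟩ := hA.assoc_left hy₁w hx₁t
  exact ⟨z, w, hz, hw, hzw⟩

theorem perp_of_perp_add (hA : A.IsGPEA) (heq : A.R e q w) (hqe : A.R q e w)
    (her : A.perp e r) (hqr : A.R q r f) (hwr : A.Defined w r) : A.perp e f := by
  obtain ⟨t, hwt⟩ := hwr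
  obtain ⟨f', hqr', hef⟩ := hA.assoc_right heq hwt
  obtain ⟨er, her₁, hre⟩ := her
  obtain ⟨er', her', hqer⟩ := hA.assoc_right hqe hwt
  rw [hA.R_unique her' her₁] at hqer
  obtain ⟨f'', hqr'', hfe⟩ := hA.assoc_left hre hqer
  rw [hA.R_unique hqr' hqr] at hef
  rw [hA.R_unique hqr'' hqr] at hfe
  exact ⟨t, hef, hfe⟩

theorem add_le_add_of_perp (hA : A.IsGPEA) (hx : A.le x c) (hy : A.le y d) (hxy : A.R x y t)
    (hxd : A.perp x d) (hdc : A.R d c s) : A.le t s := by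
  obtain ⟨w, hyw⟩ := hy
  obtain ⟨xd, hxd₁, hdx⟩ := hxd
  obtain ⟨t', hxy', htw⟩ := hA.assoc_left hyw hxd₁
  rw [hA.R_unique hxy' hxy] at htw
  obtain ⟨z, hxz⟩ := hx
  obtain ⟨dx, hdx', hdxz⟩ := hA.assoc_left hxz hdc
  rw [hA.R_unique hdx' hdx] at hdxz
  exact hA.le_trans ⟨w, htw⟩ ⟨z, hdxz⟩

end IsGPEA

theorem perp.symm {a b : E} (h : A.perp a b) : A.perp b a := by
  obtain ⟨s, h₁, h₂⟩ := h
  exact ⟨s, h₂, h₁⟩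

/-- A chosen value of `a ⊕ b`, meaningful when `a ⊕ b` is defined. -/
noncomputable def sum (A : PartialAlg E) (a b : E) : E :=
  letI : Nonempty E := ⟨A.zero⟩
  Classical.epsilon (A.R a b)

theorem R_sum {a b : E} (h : A.Defined a b) : A.R a b (A.sum a b) := Classical.epsilon_spec h

namespace IsExo

variable {π κ ξ : E → E} {a b e f s w x y : E}

theorem map_R (hπ : A.IsExo π) (h : A.R e f s) : A.R (π e) (π f) (π s) := hπ.1 e f s h

theorem idem (hπ : A.IsExo π) (e : E) : π (π e) = π e := hπ.2.1 e

theorem map_le (hπ : A.IsExo π) (e : E) : A.le (π e) e := hπ.2.2.1 e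

theorem perp (hπ : A.IsExo π) (he : π e = e) (hf : π f = A.zero) : A.perp e f :=
  hπ.2.2.2 e f he hf

theorem map_zero (hA : A.IsGPEA) (hπ : A.IsExo π) : π A.zero = A.zero :=
  hA.cancel_left (hπ.map_R (hA.R_zero_right A.zero)) (hA.R_zero_right _)

theorem map_le_map (hπ : A.IsExo π) (h : A.le a b) : A.le (π a) (π b) := by
  obtain ⟨x, hx⟩ := h
  exact ⟨π x, hπ.map_R hx⟩

theorem map_eq_zero_of_R (hA : A.IsGPEA) (hπ : A.IsExo π) (h : A.R (π e) x e) :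
    π x = A.zero := by
  have h' := hπ.map_R h
  rw [hπ.idem] at h'
  exact hA.cancel_left h' (hA.R_zero_right _)

theorem map_eq_self_of_le (hA : A.IsGPEA) (hπ : A.IsExo π) (hw : π w = w) (hy : A.le y w) :
    π y = y := by
  obtain ⟨z, hyz⟩ := hy
  obtain ⟨u, hu⟩ := hπ.map_le y
  have hπyz : A.R (π y) (π z) w := hw ▸ hπ.map_R hyz
  obtain ⟨t, hut, hπyt⟩ := hA.assoc_right hu hyz
  rw [hA.cancel_left hπyt hπyz] at hut
  have hπz : π z = z := hA.le_antisymm (hπ.map_le z) (hA.le_of_R_right hut)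
  rw [hπz] at hut
  rw [hA.cancel_right hut (hA.R_zero_left z)] at hu
  exact hA.R_unique (hA.R_zero_right _) hu

theorem R_exoCompl (hπ : A.IsExo π) (e : E) : A.R (π e) (A.exoCompl π e) e :=
  Classical.epsilon_spec (hπ.map_le e)

theorem exoCompl_eq_of_R (hA : A.IsGPEA) (hπ : A.IsExo π) (h : A.R (π e) x e) :
    A.exoCompl π e = x :=
  hA.cancel_left (hπ.R_exoCompl e) h

theorem map_exoCompl (hA : A.IsGPEA) (hπ : A.IsExo π) (e : E) :
    π (A.exoCompl π e) = A.zero :=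
  hπ.map_eq_zero_of_R hA (hπ.R_exoCompl e)

theorem exoCompl_eq_self (hA : A.IsGPEA) (hπ : A.IsExo π) (h : π e = A.zero) :
    A.exoCompl π e = e :=
  hπ.exoCompl_eq_of_R hA (h ▸ hA.R_zero_left e)

theorem exoCompl_map (hA : A.IsGPEA) (hπ : A.IsExo π) (e : E) :
    A.exoCompl π (π e) = A.zero :=
  hπ.exoCompl_eq_of_R hA ((hπ.idem e).symm ▸ hA.R_zero_right (π e))

protected theorem exoCompl (hA : A.IsGPEA) (hπ : A.IsExo π) : A.IsExo (A.exoCompl π) := by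
  refine ⟨fun e f s hefs => ?_, fun e => hπ.exoCompl_eq_self hA (hπ.map_exoCompl hA e),
    fun e => hA.le_of_R_right (hπ.R_exoCompl e), fun e f he hf => ?_⟩
  · have hperp := (hπ.perp (hπ.idem f) (hπ.map_exoCompl hA e)).symm
    obtain ⟨z, w, hz, hw, hzw⟩ :=
      hA.interchange (hπ.R_exoCompl e) (hπ.R_exoCompl f) hefs hperp
    rw [hA.R_unique hz (hπ.map_R hefs)] at hzw
    rwa [hπ.exoCompl_eq_of_R hA hzw]
  · have hee := hπ.R_exoCompl e
    have hff := hπ.R_exoCompl f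
    rw [he] at hee
    rw [hf] at hff
    have hπe : π e = A.zero := hA.cancel_right hee (hA.R_zero_left e)
    have hπf : π f = f := hA.R_unique (hA.R_zero_right _) hff
    exact (hπ.perp hπf hπe).symm

protected theorem comp (hA : A.IsGPEA) (hκ : A.IsExo κ) (hπ : A.IsExo π) :
    A.IsExo (κ ∘ π) := by
  refine ⟨fun e f s h => hκ.map_R (hπ.map_R h), fun e => ?_,
    fun e => hA.le_trans (hκ.map_le (π e)) (hπ.map_le e), fun e f he hf => ?_⟩
  · show κ (π (κ (π e))) = κ (π e)
    rw [hπ.map_eq_self_of_le hA (hπ.idem e) (hκ.map_le (π e)), hκ.idem]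
  · -- `f = π f ⊕ π′ f`, where `κ` fixes `e` and kills `π f`, and `π` fixes `e` and kills `π′ f`
    have hle : A.le (κ (π e)) (π e) := hκ.map_le (π e)
    rw [show κ (π e) = e from he] at hle
    have hπe : π e = e := hA.le_antisymm (hπ.map_le e) hle
    have hκe : κ e = e := by simpa only [Function.comp_apply, hπe] using he
    obtain ⟨w, hew, hwe⟩ := hκ.perp hκe hf
    have hπw : π w = w := by
      have h := hπ.map_R hew
      rw [hπe, hπ.idem] at h
      exact hA.R_unique h hew
    have hr := hπ.map_exoCompl hA f
    exact hA.perp_of_perp_add hew hwe (hπ.perp hπe hr) (hπ.R_exoCompl f)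
      ⟨_, (hπ.perp hπw hr).choose_spec.1⟩

protected theorem exoSup (hA : A.IsGPEA) (hπ : A.IsExo π) (hξ : A.IsExo ξ) :
    A.IsExo (A.exoSup π ξ) :=
  ((hπ.exoCompl hA).comp hA (hξ.exoCompl hA)).exoCompl hA

theorem R_exoSup (hA : A.IsGPEA) (hπ : A.IsExo π) (hξ : A.IsExo ξ) (e : E) :
    A.R (ξ e) (π (A.exoCompl ξ e)) (A.exoSup π ξ e) := by
  set v := A.exoCompl ξ e
  have hκ := (hπ.exoCompl hA).comp hA (hξ.exoCompl hA)
  obtain ⟨t, het, hte⟩ := hA.assoc_left (hπ.R_exoCompl v) (hξ.R_exoCompl e)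
  have hξπv : ξ (π v) = A.zero := hA.eq_zero_of_le_zero
    (hξ.map_exoCompl hA e ▸ hξ.map_le_map (hπ.map_le v))
  have hκt : (A.exoCompl π ∘ A.exoCompl ξ) t = A.zero := by
    have h := hκ.map_R het
    simp only [Function.comp_apply, hξ.exoCompl_map hA, (hπ.exoCompl hA).map_zero hA,
      hξ.exoCompl_eq_self hA hξπv, hπ.exoCompl_map hA] at h
    exact hA.R_unique h (hA.R_zero_right _)
  obtain ⟨w, hw, htw⟩ := hκ.perp (hκ.idem e) hκt
  rw [hA.R_unique htw hte] at hw
  rwa [show A.exoSup π ξ e = t from hκ.exoCompl_eq_of_R hA hw]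

theorem exoSup_eq_self_of_left (hA : A.IsGPEA) (hπ : A.IsExo π) (hξ : A.IsExo ξ)
    (he : π e = e) : A.exoSup π ξ e = e := by
  have h := hπ.R_exoSup hA hξ e
  rw [hπ.map_eq_self_of_le hA he (hA.le_of_R_right (hξ.R_exoCompl e))] at h
  exact hA.R_unique h (hξ.R_exoCompl e)

theorem exoSup_eq_self_of_right (hA : A.IsGPEA) (hπ : A.IsExo π) (hξ : A.IsExo ξ)
    (he : ξ e = e) : A.exoSup π ξ e = e := by
  have h := hπ.R_exoSup hA hξ e
  have hξ'e : A.exoCompl ξ e = A.zero := by simpa only [he] using hξ.exoCompl_map hA e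
  rw [hξ'e, hπ.map_zero hA, he] at h
  exact hA.R_unique h (hA.R_zero_right e)

end IsExo

theorem isExo_id (hA : A.IsGPEA) : A.IsExo (id : E → E) :=
  ⟨fun _ _ _ h => h, fun _ => rfl, hA.le_refl, fun e f _ (hf : f = A.zero) => by
    rw [hf]
    exact ⟨e, hA.R_zero_right e, hA.R_zero_left e⟩⟩

theorem isExo_const_zero (hA : A.IsGPEA) : A.IsExo (fun _ : E => A.zero) :=
  ⟨fun _ _ _ _ => hA.R_zero_right _, fun _ => rfl, hA.zero_le,
    fun _ f he _ => he ▸ ⟨f, hA.R_zero_left f, hA.R_zero_right f⟩⟩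

/-- `π` maps `E` onto the interval `E[0, m]` (see `IsRangeTop.range_eq`). -/
def IsRangeTop (A : PartialAlg E) (π : E → E) (m : E) : Prop :=
  π m = m ∧ ∀ a, A.le (π a) m

namespace IsRangeTop

variable {π κ ξ : E → E} {a b c d e j m s z : E}

theorem map_eq_self_iff (hA : A.IsGPEA) (hπ : A.IsExo π) (hm : A.IsRangeTop π m) :
    π e = e ↔ A.le e m :=
  ⟨fun h => h ▸ hm.2 e, hπ.map_eq_self_of_le hA hm.1⟩

theorem range_eq (hA : A.IsGPEA) (hπ : A.IsExo π) (hm : A.IsRangeTop π m) :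
    Set.range π = {a | A.le a m} := by
  ext a
  exact ⟨by rintro ⟨x, rfl⟩; exact hm.2 x, fun ha => ⟨a, (hm.map_eq_self_iff hA hπ).2 ha⟩⟩

theorem le_map_of_le (hA : A.IsGPEA) (hπ : A.IsExo π) (hm : A.IsRangeTop π m)
    (hza : A.le z a) (hzm : A.le z m) : A.le z (π a) :=
  (hm.map_eq_self_iff hA hπ).2 hzm ▸ hπ.map_le_map hza

theorem map_eq_zero_of_R_left (hA : A.IsGPEA) (hπ : A.IsExo π) (hm : A.IsRangeTop π m)
    (h : A.R m b s) : π b = A.zero := by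
  have hπs := hπ.map_R h
  rw [hm.1] at hπs
  rw [hA.le_antisymm (hm.2 s) ⟨_, hπs⟩] at hπs
  exact hA.cancel_left hπs (hA.R_zero_right m)

theorem map_eq_zero_of_R_right (hA : A.IsGPEA) (hπ : A.IsExo π) (hm : A.IsRangeTop π m)
    (h : A.R b m s) : π b = A.zero := by
  have hπs := hπ.map_R h
  rw [hm.1] at hπs
  rw [hA.le_antisymm (hm.2 s) (hA.le_of_R_right hπs)] at hπs
  exact hA.cancel_right hπs (hA.R_zero_left m)

theorem central (hA : A.IsGPEA) (hπ : A.IsExo π) (hm : A.IsRangeTop π m) : A.Central m := by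
  have hfix : ∀ {e}, π e = e ↔ A.le e m := hm.map_eq_self_iff hA hπ
  refine ⟨fun a => ?_, fun a b ha ⟨s, hbm⟩ => ?_, fun a b s ha hb hab => ?_,
    fun a b ab ⟨s, ham⟩ ⟨t, hbm⟩ hab => ?_⟩
  · obtain ⟨ρ, hρ⟩ := hπ.map_le a
    obtain ⟨t, hmρ, hρm⟩ := hπ.perp hm.1 (hπ.map_eq_zero_of_R hA hρ)
    exact ⟨π a, ρ, hm.2 a, ⟨t, hρm⟩, hρ⟩
  · exact hπ.perp (hfix.2 ha) (hm.map_eq_zero_of_R_right hA hπ hbm)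
  · have h := hπ.map_R hab
    rw [hfix.2 ha, hfix.2 hb] at h
    exact hfix.1 (hA.R_unique h hab)
  · have h := hπ.map_R hab
    rw [hm.map_eq_zero_of_R_right hA hπ ham, hm.map_eq_zero_of_R_right hA hπ hbm] at h
    obtain ⟨u, -, habm⟩ := hπ.perp hm.1 (hA.R_unique h (hA.R_zero_right _))
    exact ⟨u, habm⟩

theorem comp (hA : A.IsGPEA) (hκ : A.IsExo κ) (hπ : A.IsExo π) (hd : A.IsRangeTop π d) :
    A.IsRangeTop (κ ∘ π) (κ d) := by
  refine ⟨?_, fun a => hκ.map_le_map (hd.2 a)⟩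
  show κ (π (κ d)) = κ d
  rw [hπ.map_eq_self_of_le hA hd.1 (hκ.map_le d), hκ.idem]

theorem exoSup (hA : A.IsGPEA) (hπ : A.IsExo π) (hξ : A.IsExo ξ) (hc : A.IsRangeTop π c)
    (hd : A.IsRangeTop ξ d) (hj : A.R d (A.exoCompl ξ c) j) :
    A.IsRangeTop (A.exoSup π ξ) j := by
  have hσ := hπ.exoSup hA hξ
  have hξ' := hξ.exoCompl hA
  obtain ⟨j', hdj, hjd⟩ := hξ.perp hd.1 (hξ.map_exoCompl hA c)
  rw [hA.R_unique hdj hj] at hjd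
  refine ⟨?_, fun a => ?_⟩
  · have h := hσ.map_R hj
    rw [hπ.exoSup_eq_self_of_right hA hξ hd.1, hπ.exoSup_eq_self_of_left hA hξ
      (hπ.map_eq_self_of_le hA hc.1 (hA.le_of_R_right (hξ.R_exoCompl c)))] at h
    exact hA.R_unique h hj
  · have hfix : A.exoCompl ξ (π (A.exoCompl ξ a)) = π (A.exoCompl ξ a) :=
      hξ'.map_eq_self_of_le hA (hξ'.idem a) (hπ.map_le _)
    exact hA.add_le_add_of_perp (hd.2 a) (hfix ▸ hξ'.map_le_map (hc.2 _))
      (hπ.R_exoSup hA hξ a) (hξ.perp (hξ.idem a) (hξ.map_exoCompl hA c)) hjd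

end IsRangeTop

theorem isRangeTop_of_range_eq {π : E → E} {m : E} (hA : A.IsGPEA) (hπ : A.IsExo π)
    (h : Set.range π = {a | A.le a m}) : A.IsRangeTop π m := by
  have hle (e : E) : A.le (π e) m := by
    have he : π e ∈ Set.range π := Set.mem_range_self e
    rwa [h] at he
  obtain ⟨x, hx⟩ : m ∈ Set.range π := by
    rw [h]
    exact hA.le_refl m
  exact ⟨by rw [← hx, hπ.idem], hle⟩

theorem central_zero (hA : A.IsGPEA) : A.Central A.zero :=
  IsRangeTop.central hA (isExo_const_zero hA) ⟨rfl, fun _ => hA.le_refl _⟩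

/-- `p c` is the exocentral map `π_c` with `π_c(E) = E[0,c]`, for every central `c`. -/
structure CentralProjections (A : PartialAlg E) (p : E → E → E) : Prop where
  isExo : ∀ ⦃c⦄, A.Central c → A.IsExo (p c)
  isRangeTop : ∀ ⦃c⦄, A.Central c → A.IsRangeTop (p c) c
  unique : ∀ ⦃c⦄, A.Central c → ∀ ⦃π⦄, A.IsExo π → A.IsRangeTop π c → π = p c

namespace CentralProjections

variable {p : E → E → E} {π : E → E} {a b c d k m s u x y z : E}

theorem central_and_eq (hA : A.IsGPEA) (hP : CentralProjections A p) (hπ : A.IsExo π)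
    (hm : A.IsRangeTop π m) : A.Central m ∧ π = p m :=
  have hc := hm.central hA hπ
  ⟨hc, hP.unique hc hπ hm⟩

theorem map_eq_self_iff (hA : A.IsGPEA) (hP : CentralProjections A p) (hc : A.Central c) :
    p c a = a ↔ A.le a c :=
  (hP.isRangeTop hc).map_eq_self_iff hA (hP.isExo hc)

theorem central_meet (hA : A.IsGPEA) (hP : CentralProjections A p) (hc : A.Central c)
    (hd : A.Central d) : A.Central (p c d) :=
  ((hP.isRangeTop hd).comp hA (hP.isExo hc) (hP.isExo hd)).central hA
    ((hP.isExo hc).comp hA (hP.isExo hd))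

theorem comp_eq (hA : A.IsGPEA) (hP : CentralProjections A p) (hc : A.Central c)
    (hd : A.Central d) : p c ∘ p d = p (p c d) :=
  hP.unique (hP.central_meet hA hc hd) ((hP.isExo hc).comp hA (hP.isExo hd))
    ((hP.isRangeTop hd).comp hA (hP.isExo hc) (hP.isExo hd))

theorem meet_le_left (hP : CentralProjections A p) (hc : A.Central c) : A.le (p c d) c :=
  (hP.isRangeTop hc).2 d

theorem meet_le_right (hP : CentralProjections A p) (hc : A.Central c) : A.le (p c d) d :=
  (hP.isExo hc).map_le d

theorem le_meet (hA : A.IsGPEA) (hP : CentralProjections A p) (hc : A.Central c)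
    (hzc : A.le z c) (hzd : A.le z d) : A.le z (p c d) :=
  (hP.isRangeTop hc).le_map_of_le hA (hP.isExo hc) hzd hzc

theorem meet_comm (hA : A.IsGPEA) (hP : CentralProjections A p) (hc : A.Central c)
    (hd : A.Central d) : p c d = p d c :=
  hA.le_antisymm (hP.le_meet hA hd (hP.meet_le_right hc) (hP.meet_le_left hc))
    (hP.le_meet hA hc (hP.meet_le_right hd) (hP.meet_le_left hd))

theorem isInf (hA : A.IsGPEA) (hP : CentralProjections A p) (hc : A.Central c) :
    A.IsInf {c, d} (p c d) := by
  refine ⟨?_, fun b hb => hP.le_meet hA hc (hb c (by simp)) (hb d (by simp))⟩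
  rintro a (rfl | rfl)
  exacts [hP.meet_le_left hc, hP.meet_le_right hc]

theorem le_iff_exoLe (hA : A.IsGPEA) (hP : CentralProjections A p) (hc : A.Central c)
    (hd : A.Central d) : A.le c d ↔ A.exoLe (p c) (p d) := by
  refine ⟨fun hcd => ?_, fun h => ?_⟩
  · have hmeet : p c d = c :=
      hA.le_antisymm (hP.meet_le_left hc) (hP.le_meet hA hc (hA.le_refl c) hcd)
    exact (hmeet ▸ hP.comp_eq hA hc hd).symm
  · have hc' : p c (p d c) = c := (congrFun h c).symm.trans ((hP.isRangeTop hc).1)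
    exact hA.le_trans (hc' ▸ (hP.isExo hc).map_le (p d c)) (hP.meet_le_left hd)

theorem eq_of_proj_eq (hA : A.IsGPEA) (hP : CentralProjections A p) (hc : A.Central c)
    (hd : A.Central d) (h : p c = p d) : c = d := by
  refine hA.le_antisymm ?_ ?_
  · exact (hP.isRangeTop hc).1 ▸ h ▸ hP.meet_le_left hd
  · exact (hP.isRangeTop hd).1 ▸ h.symm ▸ hP.meet_le_left hc

theorem central_exoCompl (hA : A.IsGPEA) (hP : CentralProjections A p) (hc : A.Central c)
    (hd : A.Central d) : A.Central (A.exoCompl (p c) d) :=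
  ((hP.isRangeTop hd).comp hA ((hP.isExo hc).exoCompl hA) (hP.isExo hd)).central hA
    (((hP.isExo hc).exoCompl hA).comp hA (hP.isExo hd))

theorem meet_exoCompl_eq_zero (hA : A.IsGPEA) (hP : CentralProjections A p)
    (hu : A.Central u) (hb : A.Central b) (hub : A.le u b) :
    p u (A.exoCompl (p b) a) = A.zero := by
  have hfix : p b (p u (A.exoCompl (p b) a)) = p u (A.exoCompl (p b) a) :=
    (hP.map_eq_self_iff hA hb).2 (hA.le_trans (hP.meet_le_left hu) hub)
  refine hA.eq_zero_of_le_zero ?_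
  rw [← hfix, ← (hP.isExo hb).map_exoCompl hA a]
  exact (hP.isExo hb).map_le_map (hP.meet_le_right hu)

noncomputable def join (A : PartialAlg E) (p : E → E → E) (c d : E) : E :=
  A.sum c (A.exoCompl (p c) d)

theorem R_join (hA : A.IsGPEA) (hP : CentralProjections A p) (hc : A.Central c) :
    A.R c (A.exoCompl (p c) d) (join A p c d) := by
  obtain ⟨s, hs, -⟩ := (hP.isExo hc).perp (hP.isRangeTop hc).1 ((hP.isExo hc).map_exoCompl hA d)
  exact R_sum ⟨s, hs⟩

theorem isRangeTop_exoSup (hA : A.IsGPEA) (hP : CentralProjections A p) (hc : A.Central c)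
    (hd : A.Central d) : A.IsRangeTop (A.exoSup (p d) (p c)) (join A p c d) :=
  (hP.isRangeTop hd).exoSup hA (hP.isExo hd) (hP.isExo hc) (hP.isRangeTop hc)
    (hP.R_join hA hc)

theorem central_join (hA : A.IsGPEA) (hP : CentralProjections A p) (hc : A.Central c)
    (hd : A.Central d) : A.Central (join A p c d) :=
  (hP.central_and_eq hA ((hP.isExo hd).exoSup hA (hP.isExo hc))
    (hP.isRangeTop_exoSup hA hc hd)).1

theorem exoSup_eq (hA : A.IsGPEA) (hP : CentralProjections A p) (hc : A.Central c)
    (hd : A.Central d) : A.exoSup (p d) (p c) = p (join A p c d) :=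
  (hP.central_and_eq hA ((hP.isExo hd).exoSup hA (hP.isExo hc))
    (hP.isRangeTop_exoSup hA hc hd)).2

theorem le_join_left (hA : A.IsGPEA) (hP : CentralProjections A p) (hc : A.Central c) :
    A.le c (join A p c d) :=
  ⟨_, hP.R_join hA hc⟩

theorem le_join_right (hA : A.IsGPEA) (hP : CentralProjections A p) (hc : A.Central c)
    (hd : A.Central d) : A.le d (join A p c d) := by
  refine ((hP.isRangeTop_exoSup hA hc hd).map_eq_self_iff hA
    ((hP.isExo hd).exoSup hA (hP.isExo hc))).1 ?_
  exact (hP.isExo hd).exoSup_eq_self_of_left hA (hP.isExo hc) (hP.isRangeTop hd).1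

theorem join_le (hA : A.IsGPEA) (hP : CentralProjections A p) (hc : A.Central c)
    (hcb : A.le c b) (hdb : A.le d b) : A.le (join A p c d) b := by
  have hpcb : p c b = c :=
    hA.le_antisymm (hP.meet_le_left hc) (hP.le_meet hA hc (hA.le_refl c) hcb)
  have hb := (hP.isExo hc).R_exoCompl b
  rw [hpcb] at hb
  obtain ⟨u, hu⟩ := ((hP.isExo hc).exoCompl hA).map_le_map hdb
  obtain ⟨j, hj, hjb⟩ := hA.assoc_left hu hb
  rw [hA.R_unique hj (hP.R_join hA hc)] at hjb
  exact ⟨u, hjb⟩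

theorem isSup (hA : A.IsGPEA) (hP : CentralProjections A p) (hc : A.Central c)
    (hd : A.Central d) : A.IsSup {c, d} (join A p c d) := by
  refine ⟨?_, fun b hb => ?_⟩
  · rintro a (rfl | rfl)
    exacts [hP.le_join_left hA hc, hP.le_join_right hA hc hd]
  · exact hP.join_le hA hc (hb c (by simp)) (hb d (by simp))

theorem join_eq_of_R (hA : A.IsGPEA) (hP : CentralProjections A p) (hc : A.Central c)
    (h : A.R c d s) : join A p c d = s := by
  have h' := hP.R_join hA (d := d) hc
  rw [(hP.isExo hc).exoCompl_eq_self hA ((hP.isRangeTop hc).map_eq_zero_of_R_left hA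
    (hP.isExo hc) h)] at h'
  exact hA.R_unique h' h

theorem central_of_R (hA : A.IsGPEA) (hP : CentralProjections A p) (hc : A.Central c)
    (hd : A.Central d) (h : A.R c d s) : A.Central s :=
  hP.join_eq_of_R hA hc h ▸ hP.central_join hA hc hd

theorem perp_of_R (hA : A.IsGPEA) (hP : CentralProjections A p) (hc : A.Central c)
    (h : A.R c d s) : A.perp c d :=
  (hP.isExo hc).perp (hP.isRangeTop hc).1
    ((hP.isRangeTop hc).map_eq_zero_of_R_left hA (hP.isExo hc) h)

theorem meet_join_le (hA : A.IsGPEA) (hP : CentralProjections A p) (hx : A.Central x)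
    (hy : A.Central y) (hz : A.Central z) (hk : A.Central k) (hyk : A.le (p x y) k)
    (hzk : A.le (p x z) k) : A.le (p x (join A p y z)) k := by
  rw [hP.meet_comm hA hx (hP.central_join hA hy hz), ← hP.exoSup_eq hA hy hz]
  refine hk.2.2.1 _ _ _ ?_ ?_ ((hP.isExo hz).R_exoSup hA (hP.isExo hy) x)
  · exact hP.meet_comm hA hy hx ▸ hyk
  · refine hA.le_trans (hP.le_meet hA hx ?_ (hP.meet_le_left hz)) hzk
    exact hA.le_trans (hP.meet_le_right hz) (hA.le_of_R_right ((hP.isExo hy).R_exoCompl x))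

noncomputable abbrev centralLattice (hA : A.IsGPEA) (hP : CentralProjections A p) :
    Lattice {c : E // A.Central c} where
  le x y := A.le x.1 y.1
  le_refl x := hA.le_refl x.1
  le_trans _ _ _ := hA.le_trans
  le_antisymm _ _ h₁ h₂ := Subtype.ext (hA.le_antisymm h₁ h₂)
  sup x y := ⟨join A p x.1 y.1, hP.central_join hA x.2 y.2⟩
  le_sup_left x _ := hP.le_join_left hA x.2
  le_sup_right x y := hP.le_join_right hA x.2 y.2
  sup_le x _ _ := hP.join_le hA x.2
  inf x y := ⟨p x.1 y.1, hP.central_meet hA x.2 y.2⟩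
  inf_le_left x _ := hP.meet_le_left x.2
  inf_le_right x _ := hP.meet_le_right x.2
  le_inf _ y _ := hP.le_meet hA y.2

noncomputable abbrev centralGeneralizedBooleanAlgebra (hA : A.IsGPEA)
    (hP : CentralProjections A p) : GeneralizedBooleanAlgebra {c : E // A.Central c} :=
  letI := hP.centralLattice hA
  { DistribLattice.ofInfSupLe fun x y z =>
      hP.meet_join_le hA x.2 y.2 z.2 (x ⊓ y ⊔ x ⊓ z).2 (le_sup_left (a := x ⊓ y) (b := x ⊓ z))
        (le_sup_right (a := x ⊓ y) (b := x ⊓ z)) with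
    sdiff x y := ⟨A.exoCompl (p y.1) x.1, hP.central_exoCompl hA y.2 x.2⟩
    bot := ⟨A.zero, central_zero hA⟩
    sup_inf_sdiff x y := Subtype.ext <| hP.join_eq_of_R hA (hP.central_meet hA x.2 y.2) <| by
      have h := (hP.isExo y.2).R_exoCompl x.1
      rw [hP.meet_comm hA y.2 x.2] at h
      exact h
    inf_inf_sdiff x y := Subtype.ext <| hP.meet_exoCompl_eq_zero hA
      (hP.central_meet hA x.2 y.2) y.2 (hP.meet_le_right x.2) }

noncomputable def centralEquiv (hA : A.IsGPEA) (hP : CentralProjections A p) :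
    {c : E // A.Central c} ≃ {π : E → E // ∃ c, A.Central c ∧ π = p c} :=
  Equiv.ofBijective (fun c => ⟨p c.1, c.1, c.2, rfl⟩)
    ⟨fun c d h => Subtype.ext (hP.eq_of_proj_eq hA c.2 d.2 (congrArg Subtype.val h)),
      fun ⟨_, c, hc, hπ⟩ => ⟨⟨c, hc⟩, Subtype.ext hπ.symm⟩⟩

noncomputable abbrev projectionGeneralizedBooleanAlgebra (hA : A.IsGPEA)
    (hP : CentralProjections A p) :
    GeneralizedBooleanAlgebra {π : E → E // ∃ c, A.Central c ∧ π = p c} :=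
  letI := hP.centralGeneralizedBooleanAlgebra hA
  (hP.centralEquiv hA).symm.generalizedBooleanAlgebra

theorem exoLe_iff (hA : A.IsGPEA) (hP : CentralProjections A p)
    (x y : {π : E → E // ∃ c, A.Central c ∧ π = p c}) :
    A.exoLe x.1 y.1 ↔ A.le ((hP.centralEquiv hA).symm x).1 ((hP.centralEquiv hA).symm y).1 := by
  obtain ⟨c, rfl⟩ := (hP.centralEquiv hA).surjective x
  obtain ⟨d, rfl⟩ := (hP.centralEquiv hA).surjective y
  rw [Equiv.symm_apply_apply, Equiv.symm_apply_apply]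
  exact (hP.le_iff_exoLe hA c.2 d.2).symm

theorem exists_top_iff (hA : A.IsGPEA) (hP : CentralProjections A p) :
    (∃ top : E, ∀ a : E, A.le a top) ↔ ∀ π : E → E, A.IsExo π → ∃ c, A.Central c ∧ π = p c := by
  refine ⟨fun ⟨top, htop⟩ π hπ => ⟨π top, ?_⟩, fun h => ?_⟩
  · exact hP.central_and_eq hA hπ ⟨hπ.idem top, fun a => hπ.map_le_map (htop a)⟩
  · obtain ⟨c, hc, hid⟩ := h id (isExo_id hA)
    refine ⟨c, fun a => ?_⟩
    have h := (hP.isRangeTop hc).2 a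
    rwa [← hid] at h

end CentralProjections

end GPEApaper.PartialAlg

open GPEApaper PartialAlg in
/-- Theorem 4.5: with π_c the unique element of ΓEX(E) satisfying
π_c(E) = E[0,c] for central c: (i) {π_c : c ∈ Γ(E)} is a sublattice of the
boolean algebra ΓEX(E) and a generalized boolean algebra; (ii) Γ(E) is a
commutative lattice-ordered sub-GPEA of E; (iii) c ↦ π_c is a lattice
isomorphism of Γ(E) onto {π_c : c ∈ Γ(E)}; (iv) Γ(E) is a generalized
boolean algebra (distributive, relatively complemented, smallest element 0);
(v) E is a PEA (has a greatest element) iff {π_c : c ∈ Γ(E)} = ΓEX(E). -/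
theorem stmt_11 {E : Type u} (A : PartialAlg E) (hA : A.IsGPEA)
    (p : E → E → E)
    (hp : ∀ c : E, A.Central c →
      A.IsExo (p c) ∧ Set.range (p c) = {a : E | A.le a c})
    (hpu : ∀ c : E, A.Central c → ∀ π : E → E, A.IsExo π →
      Set.range π = {a : E | A.le a c} → π = p c) :
    -- (i) {π_c : c ∈ Γ(E)} is a sublattice of ΓEX(E) (closed under the meet,
    -- which is composition, and the join (π′ ∘ ξ′)′), and it is a
    -- generalized boolean algebra under the order of ΓEX(E)
    ((∀ c d : E, A.Central c → A.Central d →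
        (∃ m : E, A.Central m ∧ p c ∘ p d = p m) ∧
        (∃ jn : E, A.Central jn ∧ A.exoSup (p c) (p d) = p jn)) ∧
      ∃ B : GeneralizedBooleanAlgebra {π : E → E // ∃ c, A.Central c ∧ π = p c},
        letI := B; ∀ x y : {π : E → E // ∃ c, A.Central c ∧ π = p c},
          x ≤ y ↔ A.exoLe x.1 y.1) ∧
    -- (ii) Γ(E) is a commutative lattice-ordered sub-GPEA of E
    (A.Central A.zero ∧
      (∀ c d s : E, A.Central c → A.Central d → A.R c d s → A.Central s) ∧
      (∀ c d : E, A.Central c → A.Central d → A.Defined c d → A.perp c d) ∧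
      (∀ c d : E, A.Central c → A.Central d →
        (∃ m : E, A.Central m ∧ A.IsInf {c, d} m) ∧
        (∃ jn : E, A.Central jn ∧ A.IsSup {c, d} jn))) ∧
    -- (iii) c ↦ π_c is a lattice (order) isomorphism onto {π_c : c ∈ Γ(E)}
    ((∀ c d : E, A.Central c → A.Central d → (A.le c d ↔ A.exoLe (p c) (p d))) ∧
      ∀ c d : E, A.Central c → A.Central d → p c = p d → c = d) ∧
    -- (iv) Γ(E) is a generalized boolean algebra with smallest element 0
    (∃ B : GeneralizedBooleanAlgebra {c : E // A.Central c}, letI := B;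
      (∀ x y : {c : E // A.Central c}, x ≤ y ↔ A.le x.1 y.1) ∧
      (⊥ : {c : E // A.Central c}).1 = A.zero) ∧
    -- (v) E has a greatest element iff {π_c : c ∈ Γ(E)} = ΓEX(E)
    ((∃ top : E, ∀ a : E, A.le a top) ↔
      ∀ π : E → E, A.IsExo π → ∃ c, A.Central c ∧ π = p c) := by
  have hP : CentralProjections A p :=
    ⟨fun c hc => (hp c hc).1, fun c hc => isRangeTop_of_range_eq hA (hp c hc).1 (hp c hc).2,
      fun c hc π hπ hm => hpu c hc π hπ (hm.range_eq hA hπ)⟩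
  refine ⟨⟨fun c d hc hd => ⟨⟨p c d, hP.central_meet hA hc hd, hP.comp_eq hA hc hd⟩,
      ⟨_, hP.central_join hA hd hc, hP.exoSup_eq hA hd hc⟩⟩,
      ⟨hP.projectionGeneralizedBooleanAlgebra hA, fun x y => (hP.exoLe_iff hA x y).symm⟩⟩,
    ⟨central_zero hA, fun c d s hc hd h => hP.central_of_R hA hc hd h,
      fun c d hc _ ⟨s, h⟩ => hP.perp_of_R hA hc h,
      fun c d hc hd => ⟨⟨_, hP.central_meet hA hc hd, hP.isInf hA hc⟩,
        ⟨_, hP.central_join hA hc hd, hP.isSup hA hc hd⟩⟩⟩,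
    ⟨fun c d hc hd => hP.le_iff_exoLe hA hc hd, fun c d hc hd => hP.eq_of_proj_eq hA hc hd⟩,
    ⟨hP.centralGeneralizedBooleanAlgebra hA, fun _ _ => Iff.rfl, rfl⟩, hP.exists_top_iff hA⟩
end

section
/- Let u be the largest element of the center Γ(E) of a centrally orthocomplete generalized pseudoeffect algebra E. Then: (i) the pseudoeffect algebra E[0,u] is a direct summand of E with complementary direct summand {f ∈ E : f ⊥ u} = {e ⊖ (u∧e) : e ∈ E}; (ii) the center of E[0,u] is Γ(E), and the complementary summand {f ∈ E : f ⊥ u} is centerless (its center is {0}); (iii) if E = H⊕K is any direct sum decomposition where H is a pseudoeffect algebra (has a greatest element) and K is centerless, then H = E[0,u] and K = {f ∈ E : f ⊥ u}. -/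
/- Common framework: generalized pseudoeffect algebras (GPEAs), after
   Foulis, Pulmannová, Vinceková, "The exocenter and type decompositions for
   generalized pseudoeffect algebras".
   A partial binary operation ⊕ is represented by its graph
   `R : E → E → E → Prop`, where `R a b s` means "a ⊕ b is defined and equals s". -/

universe u v

namespace GPEAaux

open GPEApaper PartialAlg

universe w
variable {E : Type w} {A : PartialAlg E}

theorem funcR (hA : A.IsGPEA) : ∀ a b c d : E, A.R a b c → A.R a b d → c = d := hA.1
theorem as1 (hA : A.IsGPEA) : ∀ a b c ab abc : E, A.R a b ab → A.R ab c abc →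
    ∃ bc, A.R b c bc ∧ A.R a bc abc := hA.2.1
theorem as2 (hA : A.IsGPEA) : ∀ a b c bc abc : E, A.R b c bc → A.R a bc abc →
    ∃ ab, A.R a b ab ∧ A.R ab c abc := hA.2.2.1
theorem conjR (hA : A.IsGPEA) : ∀ a b s : E, A.R a b s →
    (∃ d, A.R d a s) ∧ (∃ e, A.R b e s) := hA.2.2.2.1
theorem cancL (hA : A.IsGPEA) : ∀ a b c s : E, A.R a b s → A.R a c s → b = c :=
  hA.2.2.2.2.1
theorem cancR (hA : A.IsGPEA) : ∀ a b c s : E, A.R b a s → A.R c a s → b = c :=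
  hA.2.2.2.2.2.1
theorem posR (hA : A.IsGPEA) : ∀ a b : E, A.R a b A.zero → a = A.zero ∧ b = A.zero :=
  hA.2.2.2.2.2.2.1
theorem zerR (hA : A.IsGPEA) : ∀ a : E, A.R a A.zero a ∧ A.R A.zero a a :=
  hA.2.2.2.2.2.2.2

theorem le_refl (hA : A.IsGPEA) (a : E) : A.le a a := ⟨A.zero, (zerR hA a).1⟩

theorem zero_le (hA : A.IsGPEA) (a : E) : A.le A.zero a := ⟨a, (zerR hA a).2⟩

theorem le_of_R_left {a x b : E} (h : A.R a x b) : A.le a b := ⟨x, h⟩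

theorem le_of_R_right (hA : A.IsGPEA) {a x b : E} (h : A.R a x b) : A.le x b :=
  (conjR hA a x b h).2

theorem le_left_of_le (hA : A.IsGPEA) {a b : E} (h : A.le a b) : ∃ y, A.R y a b := by
  obtain ⟨x, hx⟩ := h
  exact (conjR hA a x b hx).1

theorem le_of_le_left (hA : A.IsGPEA) {a b : E} (h : ∃ y, A.R y a b) : A.le a b := by
  obtain ⟨y, hy⟩ := h
  exact (conjR hA y a b hy).2

theorem le_trans (hA : A.IsGPEA) {a b c : E} (h1 : A.le a b) (h2 : A.le b c) :
    A.le a c := by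
  obtain ⟨x, hx⟩ := h1
  obtain ⟨y, hy⟩ := h2
  obtain ⟨t, -, ht⟩ := as1 hA a x y b c hx hy
  exact ⟨t, ht⟩

theorem le_antisymm (hA : A.IsGPEA) {a b : E} (h1 : A.le a b) (h2 : A.le b a) :
    a = b := by
  obtain ⟨x, hx⟩ := h1
  obtain ⟨y, hy⟩ := h2
  obtain ⟨t, hxy, hat⟩ := as1 hA a x y b a hx hy
  have ht0 : t = A.zero := cancL hA a t A.zero a hat (zerR hA a).1
  subst ht0
  obtain ⟨hx0, -⟩ := posR hA x y hxy
  subst hx0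
  exact (funcR hA a A.zero b a hx (zerR hA a).1).symm ▸ rfl

theorem perp_symm {a b : E} (h : A.perp a b) : A.perp b a := by
  obtain ⟨s, h1, h2⟩ := h
  exact ⟨s, h2, h1⟩

theorem defined_of_perp {a b : E} (h : A.perp a b) : A.Defined a b := by
  obtain ⟨s, h1, -⟩ := h
  exact ⟨s, h1⟩

theorem le_zero_eq (hA : A.IsGPEA) {a : E} (h : A.le a A.zero) : a = A.zero := by
  obtain ⟨x, hx⟩ := h
  exact (posR hA a x hx).1

/-- if d ≤ f and f ⊕ c exists then d ⊕ c exists (no centrality needed) -/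
theorem defined_of_le_defined (hA : A.IsGPEA) {d f c : E} (h1 : A.le d f)
    (h2 : A.Defined f c) : A.Defined d c := by
  obtain ⟨y, hy⟩ := h1
  obtain ⟨s, hs⟩ := h2
  obtain ⟨t, hyc, hdt⟩ := as1 hA d y c f s hy hs
  obtain ⟨e, hce⟩ := (conjR hA y c t hyc).2
  obtain ⟨w, hw, -⟩ := as2 hA d c e t s hce hdt
  exact ⟨w, hw⟩

end GPEAaux
namespace GPEAaux

open GPEApaper PartialAlg
universe w

variable {E : Type w} {A : PartialAlg E}

section CentralC
variable {c : E}

theorem cC1 (hc : A.Central c) :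
    ∀ a : E, ∃ a₁ a₂, A.le a₁ c ∧ A.Defined a₂ c ∧ A.R a₁ a₂ a := hc.1
theorem cC2 (hc : A.Central c) :
    ∀ a b : E, A.le a c → A.Defined b c → A.perp a b := hc.2.1
theorem cC3 (hc : A.Central c) :
    ∀ a b s : E, A.le a c → A.le b c → A.R a b s → A.le s c := hc.2.2.1
theorem cC4 (hc : A.Central c) :
    ∀ a b ab : E, A.Defined a c → A.Defined b c → A.R a b ab → A.Defined ab c :=
  hc.2.2.2

/-- x ⊕ c defined implies x ⊥ c, for central c. -/
theorem perp_of_defined (hA : A.IsGPEA) (hc : A.Central c) {x : E}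
    (h : A.Defined x c) : A.perp x c :=
  perp_symm (cC2 hc c x (le_refl hA c) h)

/-- good decomposition w.r.t. a central element. -/
theorem good_decomp (hA : A.IsGPEA) (hc : A.Central c) (a : E) :
    ∃ a₁ a₂, A.le a₁ c ∧ A.perp a₂ c ∧ A.R a₁ a₂ a := by
  obtain ⟨a₁, a₂, h1, h2, h3⟩ := cC1 hc a
  exact ⟨a₁, a₂, h1, perp_of_defined hA hc h2, h3⟩

/-- Lemma L : x ≤ c and x ⊥ c imply x = 0, for central c. -/
theorem central_le_perp_zero (hA : A.IsGPEA) (hc : A.Central c) {x : E}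
    (h1 : A.le x c) (h2 : A.Defined x c) : x = A.zero := by
  obtain ⟨y, hxy⟩ := h1
  obtain ⟨s, hxcs, hcxs⟩ := perp_of_defined hA hc h2
  -- c ⊕ x = (x ⊕ y) ⊕ x
  obtain ⟨t, hyx, hxt⟩ := as1 hA x y x c s hxy hcxs
  have htc : t = c := cancL hA x t c s hxt hxcs
  subst t
  -- x ⊕ c = x ⊕ (x ⊕ y)
  obtain ⟨w, hxx, hwy⟩ := as2 hA x x y c s hxy hxcs
  have hwc : A.le w c := cC3 hc x x w ⟨y, hxy⟩ ⟨y, hxy⟩ hxx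
  have hyc : A.le y c := le_of_R_right hA hxy
  have hsc : A.le s c := cC3 hc w y s hwc hyc hwy
  have hcs : A.le c s := ⟨x, hcxs⟩
  have hseq : s = c := le_antisymm hA hsc hcs
  subst s
  exact cancL hA c x A.zero c hcxs (zerR hA c).1

/-- Key step for uniqueness of good decompositions. -/
theorem uniq_le (hA : A.IsGPEA) (hc : A.Central c) {h k h' k' a g g' : E}
    (hhk : A.R h k a) (hh'k' : A.R h' k' a) (hh : A.le h c) (hh' : A.le h' c)
    (hck : A.R c k g) (hck' : A.R c k' g') (hk'c : A.R k' c g') : A.le g g' := by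
  obtain ⟨p', hp'⟩ := le_left_of_le hA hh
  -- g = p' ⊕ a
  obtain ⟨m, hm, hp'm⟩ := as1 hA p' h k c g hp' hck
  have hma : m = a := funcR hA h k m a hm hhk
  subst m
  -- g = (p' ⊕ h') ⊕ k'
  obtain ⟨r, hp'h', hrk'⟩ := as2 hA p' h' k' a g hh'k' hp'm
  have hrc : A.le r c := cC3 hc p' h' r ⟨h, hp'⟩ hh' hp'h'
  obtain ⟨s₀, hrk'0, hk'r0⟩ := cC2 hc r k' hrc ⟨g', hk'c⟩
  have hs0 : s₀ = g := funcR hA r k' s₀ g hrk'0 hrk'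
  subst s₀
  obtain ⟨z, hrz⟩ := hrc
  obtain ⟨t, hk'rt, htz⟩ := as2 hA k' r z c g' hrz hk'c
  have ht : t = g := funcR hA k' r t g hk'rt hk'r0
  subst t
  exact ⟨z, htz⟩

/-- Uniqueness of a good decomposition w.r.t. a central element. -/
theorem uniq (hA : A.IsGPEA) (hc : A.Central c) {h k h' k' a : E}
    (hhk : A.R h k a) (hh'k' : A.R h' k' a) (hh : A.le h c) (hh' : A.le h' c)
    (hk : A.perp k c) (hk' : A.perp k' c) : h = h' ∧ k = k' := by
  obtain ⟨g, hkc, hck⟩ := hk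
  obtain ⟨g', hk'c, hck'⟩ := hk'
  have h1 : A.le g g' := uniq_le hA hc hhk hh'k' hh hh' hck hck' hk'c
  have h2 : A.le g' g := uniq_le hA hc hh'k' hhk hh' hh hck' hck hkc
  have hgg : g' = g := le_antisymm hA h2 h1
  subst g'
  have hkk' : k' = k := cancL hA c k' k g hck' hck
  subst k'
  exact ⟨cancR hA k h h' a hhk hh'k', rfl⟩

end CentralC

end GPEAaux
namespace GPEAaux

open GPEApaper PartialAlg
universe w
variable {E : Type w} {A : PartialAlg E}

/-- Assembly: if a ⊥ b₁, a ⊥ b₂, b = b₁ ⊕ b₂ and (a⊕b₁) ⊕ b₂ exists, then a ⊥ b. -/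
theorem assem (hA : A.IsGPEA) {a b₁ b₂ b x y s : E}
    (hab1 : A.R a b₁ x) (hb1a : A.R b₁ a x) (hab2 : A.R a b₂ y) (hb2a : A.R b₂ a y)
    (hb : A.R b₁ b₂ b) (hxb2 : A.R x b₂ s) : A.perp a b := by
  obtain ⟨w, hw, haw⟩ := as1 hA a b₁ b₂ x s hab1 hxb2
  have hwb : w = b := funcR hA b₁ b₂ w b hw hb
  subst w
  obtain ⟨w', hab2', hb1w'⟩ := as1 hA b₁ a b₂ x s hb1a hxb2
  have hw'y : w' = y := funcR hA a b₂ w' y hab2' hab2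
  subst w'
  obtain ⟨t, ht, hta⟩ := as2 hA b₁ b₂ a y s hb2a hb1w'
  have htb : t = b := funcR hA b₁ b₂ t b ht hb
  subst t
  exact ⟨s, haw, hta⟩

/-- Splitting a sum along good decompositions w.r.t. a central element u. -/
theorem split (hA : A.IsGPEA) {u : E} (hu : A.Central u) {a a₁ a₂ b b₁ b₂ ab : E}
    (ha : A.R a₁ a₂ a) (hb : A.R b₁ b₂ b) (hb₁ : A.le b₁ u) (ha₂ : A.Defined a₂ u)
    (hab : A.R a b ab) : ∃ v w, A.R a₁ b₁ v ∧ A.R a₂ b₂ w ∧ A.R v w ab := by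
  obtain ⟨t, ht, ha₁t⟩ := as1 hA a₁ a₂ b a ab ha hab
  obtain ⟨x, hx, hxb₂⟩ := as2 hA a₂ b₁ b₂ b t hb ht
  obtain ⟨x₀, hb₁a₂, ha₂b₁⟩ := cC2 hu b₁ a₂ hb₁ ha₂
  have hx0 : x₀ = x := funcR hA a₂ b₁ x₀ x ha₂b₁ hx
  subst x₀
  obtain ⟨w, hw, hb₁w⟩ := as1 hA b₁ a₂ b₂ x t hb₁a₂ hxb₂
  obtain ⟨v, hv, hvw⟩ := as2 hA a₁ b₁ w t ab hb₁w ha₁t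
  exact ⟨v, w, hv, hw, hvw⟩

/-- If a = a₁ ⊕ a₂, a₂ ⊥ c and a ⊕ c exists then a₁ ⊕ c exists. -/
theorem part_defined (hA : A.IsGPEA) {a a₁ a₂ c : E} (ha : A.R a₁ a₂ a)
    (hp : A.perp a₂ c) (h : A.Defined a c) : A.Defined a₁ c := by
  obtain ⟨ac, ha₂c, hca₂⟩ := hp
  obtain ⟨s, hs⟩ := h
  obtain ⟨t, ht, ha₁t⟩ := as1 hA a₁ a₂ c a s ha hs
  have htac : t = ac := funcR hA a₂ c t ac ht ha₂c
  subst t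
  obtain ⟨w, hw, -⟩ := as2 hA a₁ c a₂ ac s hca₂ ha₁t
  exact ⟨w, hw⟩

/-- If ab = v ⊕ w, w ⊥ c and (v⊕c) ⊕ w exists, then ab ⊕ c exists. -/
theorem combine_defined (hA : A.IsGPEA) {v w ab c cw z vc : E} (hvw : A.R v w ab)
    (hcw : A.R c w cw) (hwc : A.R w c cw) (hvc : A.R v c vc) (hz : A.R vc w z) :
    A.Defined ab c := by
  obtain ⟨cw', hcw', hvz⟩ := as1 hA v c w vc z hvc hz
  have : cw' = cw := funcR hA c w cw' cw hcw' hcw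
  subst cw'
  obtain ⟨t, ht, htc⟩ := as2 hA v w c cw z hwc hvz
  have htab : t = ab := funcR hA v w t ab ht hvw
  subst t
  exact ⟨z, htc⟩

section Transfer

variable {S : Set E} {h0 : A.zero ∈ S}

theorem sub_le_iff (Hdiv : ∀ ⦃a z b : E⦄, b ∈ S → A.R a z b → z ∈ S) (x y : S) :
    (A.restrictSet S h0).le x y ↔ A.le x.1 y.1 := by
  constructor
  · rintro ⟨z, hz⟩; exact ⟨z.1, hz⟩
  · rintro ⟨z, hz⟩; exact ⟨⟨z, Hdiv y.2 hz⟩, hz⟩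

theorem sub_def_iff (Hsum : ∀ ⦃a b s : E⦄, a ∈ S → b ∈ S → A.R a b s → s ∈ S)
    (x y : S) : (A.restrictSet S h0).Defined x y ↔ A.Defined x.1 y.1 := by
  constructor
  · rintro ⟨s, hs⟩; exact ⟨s.1, hs⟩
  · rintro ⟨s, hs⟩; exact ⟨⟨s, Hsum x.2 y.2 hs⟩, hs⟩

theorem sub_perp_iff (Hsum : ∀ ⦃a b s : E⦄, a ∈ S → b ∈ S → A.R a b s → s ∈ S)
    (x y : S) : (A.restrictSet S h0).perp x y ↔ A.perp x.1 y.1 := by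
  constructor
  · rintro ⟨s, h1, h2⟩; exact ⟨s.1, h1, h2⟩
  · rintro ⟨s, h1, h2⟩; exact ⟨⟨s, Hsum x.2 y.2 h1⟩, h1, h2⟩

end Transfer

end GPEAaux
namespace GPEAaux

open GPEApaper PartialAlg
universe w
variable {E : Type w} {A : PartialAlg E} {u : E}

theorem Hdiv_S (hA : A.IsGPEA) :
    ∀ ⦃a z b : E⦄, b ∈ {a : E | A.le a u} → A.R a z b → z ∈ {a : E | A.le a u} :=
  fun _ z _ hb hz => le_trans hA (le_of_R_right hA hz) hb

theorem Hsum_S (hu : A.Central u) :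
    ∀ ⦃a b s : E⦄, a ∈ {a : E | A.le a u} → b ∈ {a : E | A.le a u} → A.R a b s →
      s ∈ {a : E | A.le a u} :=
  fun a b s ha hb hr => cC3 hu a b s ha hb hr

theorem Hdiv_S' (hA : A.IsGPEA) (hu : A.Central u) :
    ∀ ⦃a z b : E⦄, b ∈ {f : E | A.perp f u} → A.R a z b → z ∈ {f : E | A.perp f u} :=
  fun _ z _ hb hz => perp_of_defined hA hu
    (defined_of_le_defined hA (le_of_R_right hA hz) (defined_of_perp hb))

theorem Hsum_S' (hA : A.IsGPEA) (hu : A.Central u) :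
    ∀ ⦃a b s : E⦄, a ∈ {f : E | A.perp f u} → b ∈ {f : E | A.perp f u} → A.R a b s →
      s ∈ {f : E | A.perp f u} :=
  fun a b s ha hb hr => perp_of_defined hA hu
    (cC4 hu a b s (defined_of_perp ha) (defined_of_perp hb) hr)

theorem perp_zero (hA : A.IsGPEA) (a : E) : A.perp A.zero a :=
  ⟨a, (zerR hA a).2, (zerR hA a).1⟩

/-- Part (i), first half: E = E[0,u] ⊕ {f : f ⊥ u}. -/
theorem directSum_i (hA : A.IsGPEA) (hu : A.Central u) :
    A.IsDirectSum {a : E | A.le a u} {f : E | A.perp f u} := by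
  refine ⟨⟨⟨A.zero, zero_le hA u⟩, ?_, ?_⟩, ⟨⟨A.zero, perp_zero hA u⟩, ?_, ?_⟩, ?_, ?_⟩
  · exact fun a ha b hb => le_trans hA hb ha
  · exact fun a ha b hb s hs => Hsum_S hu ha hb hs
  · exact fun a ha b hb => perp_of_defined hA hu (defined_of_le_defined hA hb (defined_of_perp ha))
  · exact fun a ha b hb s hs => Hsum_S' hA hu ha hb hs
  · exact fun a ha b hb => cC2 hu a b ha (defined_of_perp hb)
  · intro a
    obtain ⟨a₁, a₂, h1, h2, h3⟩ := good_decomp hA hu a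
    refine ⟨(a₁, a₂), ⟨h1, h2, h3⟩, ?_⟩
    rintro ⟨q₁, q₂⟩ ⟨hq1, hq2, hq3⟩
    obtain ⟨e1, e2⟩ := uniq hA hu hq3 h3 hq1 h1 hq2 h2
    exact Prod.ext e1 e2

/-- Part (i), second half: {f : f ⊥ u} = {e ⊖ (u ∧ e) : e ∈ E}. -/
theorem setEq_i (hA : A.IsGPEA) (hu : A.Central u) :
    {f : E | A.perp f u} =
      {x : E | ∃ e m : E, A.IsInf {u, e} m ∧ A.R m x e ∧ A.R x m e} := by
  ext x
  constructor
  · rintro ⟨g, hxu, hux⟩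
    refine ⟨g, u, ⟨?_, ?_⟩, hux, hxu⟩
    · intro a ha
      rcases ha with h | h
      · exact h ▸ le_refl hA u
      · exact h ▸ ⟨x, hux⟩
    · intro b hb
      exact hb u (Or.inl rfl)
  · rintro ⟨e, m, ⟨hlow, hglb⟩, hme, hxm⟩
    have hmu : A.le m u := hlow u (Or.inl rfl)
    obtain ⟨x₁, x₂, hx₁u, hx₂p, hx⟩ := good_decomp hA hu x
    have hxe : A.le x e := le_of_R_right hA hme
    have hx₁e : A.le x₁ e := le_trans hA (le_of_R_left hx) hxe
    have hx₁m : A.le x₁ m := by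
      refine hglb x₁ ?_
      intro a ha
      rcases ha with h | h
      · exact h ▸ hx₁u
      · exact h ▸ hx₁e
    obtain ⟨t, hmx₁, htx₂⟩ := as2 hA m x₁ x₂ x e hx hme
    have htu : A.le t u := cC3 hu m x₁ t hmu hx₁u hmx₁
    have hte : A.le t e := le_of_R_left htx₂
    have htm : A.le t m := by
      refine hglb t ?_
      intro a ha
      rcases ha with h | h
      · exact h ▸ htu
      · exact h ▸ hte
    have hmt : A.le m t := ⟨x₁, hmx₁⟩
    have heq : t = m := le_antisymm hA htm hmt
    subst t
    have hx₁0 : x₁ = A.zero := cancL hA m x₁ A.zero m hmx₁ (zerR hA m).1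
    subst x₁
    have : x = x₂ := funcR hA A.zero x₂ x x₂ hx (zerR hA x₂).2
    exact this ▸ hx₂p
end GPEAaux
namespace GPEAaux

open GPEApaper PartialAlg
universe w
variable {E : Type w} {A : PartialAlg E} {u : E}

/-- c central in E, c ≤ u implies c central in E[0,u]. -/
theorem central_to_sub (hA : A.IsGPEA) (hu : A.Central u) {h0 : A.zero ∈ {a : E | A.le a u}}
    {c : E} (hcu : A.le c u) (hc : A.Central c) :
    (A.restrictSet {a : E | A.le a u} h0).Central ⟨c, hcu⟩ := by
  refine ⟨?_, ?_, ?_, ?_⟩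
  · rintro ⟨a, ha⟩
    obtain ⟨a₁, a₂, h1, h2, h3⟩ := cC1 hc a
    have ha₁ : A.le a₁ u := le_trans hA h1 hcu
    have ha₂ : A.le a₂ u := le_trans hA (le_of_R_right hA h3) ha
    exact ⟨⟨a₁, ha₁⟩, ⟨a₂, ha₂⟩, (sub_le_iff (Hdiv_S hA) _ _).2 h1,
      (sub_def_iff (Hsum_S hu) _ _).2 h2, h3⟩
  · rintro ⟨a, ha⟩ ⟨b, hb⟩ hle hdef
    exact (sub_perp_iff (Hsum_S hu) _ _).2
      (cC2 hc a b ((sub_le_iff (Hdiv_S hA) _ _).1 hle) ((sub_def_iff (Hsum_S hu) _ _).1 hdef))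
  · rintro ⟨a, ha⟩ ⟨b, hb⟩ ⟨s, hs⟩ hale hble hr
    exact (sub_le_iff (Hdiv_S hA) _ _).2
      (cC3 hc a b s ((sub_le_iff (Hdiv_S hA) _ _).1 hale) ((sub_le_iff (Hdiv_S hA) _ _).1 hble) hr)
  · rintro ⟨a, ha⟩ ⟨b, hb⟩ ⟨ab, hab⟩ hadef hbdef hr
    exact (sub_def_iff (Hsum_S hu) _ _).2
      (cC4 hc a b ab ((sub_def_iff (Hsum_S hu) _ _).1 hadef)
        ((sub_def_iff (Hsum_S hu) _ _).1 hbdef) hr)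

/-- c ≤ u central in E[0,u] implies c central in E. -/
theorem central_of_sub (hA : A.IsGPEA) (hu : A.Central u) {h0 : A.zero ∈ {a : E | A.le a u}}
    {c : E} (hcu : A.le c u)
    (hsc : (A.restrictSet {a : E | A.le a u} h0).Central ⟨c, hcu⟩) : A.Central c := by
  refine ⟨?_, ?_, ?_, ?_⟩
  · -- C1
    intro a
    obtain ⟨a₁, a₂, ha₁, ha₂, ha⟩ := good_decomp hA hu a
    obtain ⟨b₁s, b₂s, hble, hbdef, hbr⟩ := hsc.1 ⟨a₁, ha₁⟩
    have hb₁c : A.le b₁s.1 c := (sub_le_iff (Hdiv_S hA) _ _).1 hble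
    obtain ⟨d, hb₂c⟩ : A.Defined b₂s.1 c := (sub_def_iff (Hsum_S hu) _ _).1 hbdef
    obtain ⟨t, hb₂a₂, hb₁t⟩ := as1 hA b₁s.1 b₂s.1 a₂ a₁ a hbr ha
    -- Defined t c
    obtain ⟨ac, hca₂, ha₂c⟩ := cC2 hu c a₂ hcu (defined_of_perp ha₂)
    have hdu : A.le d u := cC3 hu b₂s.1 c d b₂s.2 hcu hb₂c
    obtain ⟨s, hda₂, -⟩ := cC2 hu d a₂ hdu (defined_of_perp ha₂)
    obtain ⟨w, hca₂', hb₂w⟩ := as1 hA b₂s.1 c a₂ d s hb₂c hda₂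
    have hwac : w = ac := funcR hA c a₂ w ac hca₂' hca₂
    subst w
    obtain ⟨t', ht', ht'c⟩ := as2 hA b₂s.1 a₂ c ac s ha₂c hb₂w
    have htt : t' = t := funcR hA b₂s.1 a₂ t' t ht' hb₂a₂
    subst t'
    exact ⟨b₁s.1, t, hb₁c, ⟨s, ht'c⟩, hb₁t⟩
  · -- C2
    intro a b hac hbc
    obtain ⟨b₁, b₂, hb₁, hb₂, hbr⟩ := good_decomp hA hu b
    have hb₁c : A.Defined b₁ c := part_defined hA hbr
      (perp_symm (cC2 hu c b₂ hcu (defined_of_perp hb₂))) hbc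
    have hau : A.le a u := le_trans hA hac hcu
    have hperp1 : A.perp a b₁ := (sub_perp_iff (Hsum_S hu) _ _).1
      (hsc.2.1 ⟨a, hau⟩ ⟨b₁, hb₁⟩ ((sub_le_iff (Hdiv_S hA) _ _).2 hac)
        ((sub_def_iff (Hsum_S hu) _ _).2 hb₁c))
    obtain ⟨x, hab₁, hb₁a⟩ := hperp1
    obtain ⟨y, hab₂, hb₂a⟩ := cC2 hu a b₂ hau (defined_of_perp hb₂)
    have hxu : A.le x u := cC3 hu a b₁ x hau hb₁ hab₁
    obtain ⟨s, hxb₂, -⟩ := cC2 hu x b₂ hxu (defined_of_perp hb₂)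
    exact assem hA hab₁ hb₁a hab₂ hb₂a hbr hxb₂
  · -- C3
    intro a b s hac hbc hr
    have hau : A.le a u := le_trans hA hac hcu
    have hbu : A.le b u := le_trans hA hbc hcu
    have hsu : A.le s u := cC3 hu a b s hau hbu hr
    exact (sub_le_iff (Hdiv_S hA) (⟨s, hsu⟩ : {a : E | A.le a u}) ⟨c, hcu⟩).1
      (hsc.2.2.1 ⟨a, hau⟩ ⟨b, hbu⟩ ⟨s, hsu⟩ ((sub_le_iff (Hdiv_S hA) _ _).2 hac)
        ((sub_le_iff (Hdiv_S hA) _ _).2 hbc) hr)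
  · -- C4
    intro a b ab hac hbc hr
    obtain ⟨a₁, a₂, ha₁, ha₂, ha⟩ := good_decomp hA hu a
    obtain ⟨b₁, b₂, hb₁, hb₂, hb⟩ := good_decomp hA hu b
    have ha₁c : A.Defined a₁ c := part_defined hA ha
      (perp_symm (cC2 hu c a₂ hcu (defined_of_perp ha₂))) hac
    have hb₁c : A.Defined b₁ c := part_defined hA hb
      (perp_symm (cC2 hu c b₂ hcu (defined_of_perp hb₂))) hbc
    obtain ⟨v, w, hv, hw, hvw⟩ := split hA hu ha hb hb₁ (defined_of_perp ha₂) hr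
    have hvu : A.le v u := cC3 hu a₁ b₁ v ha₁ hb₁ hv
    obtain ⟨vc, hvc⟩ : A.Defined v c := (sub_def_iff (Hsum_S hu) _ _).1
      (hsc.2.2.2 ⟨a₁, ha₁⟩ ⟨b₁, hb₁⟩ ⟨v, hvu⟩ ((sub_def_iff (Hsum_S hu) _ _).2 ha₁c)
        ((sub_def_iff (Hsum_S hu) _ _).2 hb₁c) hv)
    have hwu : A.Defined w u := cC4 hu a₂ b₂ w (defined_of_perp ha₂) (defined_of_perp hb₂) hw
    obtain ⟨cw, hcw, hwc⟩ := cC2 hu c w hcu hwu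
    have hvcu : A.le vc u := cC3 hu v c vc hvu hcu hvc
    obtain ⟨z, hz, -⟩ := cC2 hu vc w hvcu hwu
    exact combine_defined hA hvw hcw hwc hvc hz

end GPEAaux
namespace GPEAaux

open GPEApaper PartialAlg
universe w
variable {E : Type w} {A : PartialAlg E} {u : E}

/-- k central in {f : f ⊥ u} implies k central in E. -/
theorem central_of_sub' (hA : A.IsGPEA) (hu : A.Central u)
    {hz : A.zero ∈ {f : E | A.perp f u}} {k : E} (hk : A.perp k u)
    (hsc : (A.restrictSet {f : E | A.perp f u} hz).Central ⟨k, hk⟩) : A.Central k := by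
  have Hd := Hdiv_S' hA hu
  have Hs := Hsum_S' hA hu
  refine ⟨?_, ?_, ?_, ?_⟩
  · -- C1
    intro a
    obtain ⟨a₁, a₂, ha₁, ha₂, ha⟩ := good_decomp hA hu a
    obtain ⟨ps, qs, hple, hqdef, hpq⟩ := hsc.1 ⟨a₂, ha₂⟩
    have hpk : A.le ps.1 k := (sub_le_iff Hd _ _).1 hple
    obtain ⟨qk, hqk⟩ : A.Defined qs.1 k := (sub_def_iff Hs _ _).1 hqdef
    obtain ⟨t, ht, htq⟩ := as2 hA a₁ ps.1 qs.1 a₂ a hpq ha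
    obtain ⟨t₀, ha₁p, hpa₁⟩ := cC2 hu a₁ ps.1 ha₁ (defined_of_perp ps.2)
    have : t₀ = t := funcR hA a₁ ps.1 t₀ t ha₁p ht
    subst t₀
    obtain ⟨w, ha₁q, hpw⟩ := as1 hA ps.1 a₁ qs.1 t a hpa₁ htq
    -- Defined w k
    have hqkP : A.perp qk u := Hs qs.2 hk hqk
    obtain ⟨z, hzr, -⟩ := cC2 hu a₁ qk ha₁ (defined_of_perp hqkP)
    obtain ⟨w', hw', hw'k⟩ := as2 hA a₁ qs.1 k qk z hqk hzr
    have : w' = w := funcR hA a₁ qs.1 w' w hw' ha₁q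
    subst w'
    exact ⟨ps.1, w, hpk, ⟨z, hw'k⟩, hpw⟩
  · -- C2
    intro a b hak hbk
    have haP : A.perp a u := perp_of_defined hA hu
      (defined_of_le_defined hA hak (defined_of_perp hk))
    obtain ⟨b₁, b₂, hb₁, hb₂, hbr⟩ := good_decomp hA hu b
    obtain ⟨s, hbks⟩ := hbk
    obtain ⟨t, hb₂k, -⟩ := as1 hA b₁ b₂ k b s hbr hbks
    have hab₂ : A.perp a b₂ := (sub_perp_iff Hs _ _).1
      (hsc.2.1 ⟨a, haP⟩ ⟨b₂, hb₂⟩ ((sub_le_iff Hd _ _).2 hak)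
        ((sub_def_iff Hs _ _).2 ⟨t, hb₂k⟩))
    obtain ⟨y, haby, hb₂a⟩ := hab₂
    obtain ⟨x, hb₁a, hab₁⟩ := cC2 hu b₁ a hb₁ (defined_of_perp haP)
    obtain ⟨b₀, hb₁b₂, hb₂b₁⟩ := cC2 hu b₁ b₂ hb₁ (defined_of_perp hb₂)
    have : b₀ = b := funcR hA b₁ b₂ b₀ b hb₁b₂ hbr
    subst b₀
    have hyP : A.perp y u := Hs haP hb₂ haby
    obtain ⟨s', hb₁y, hyb₁⟩ := cC2 hu b₁ y hb₁ (defined_of_perp hyP)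
    exact assem hA haby hb₂a hab₁ hb₁a hb₂b₁ hyb₁
  · -- C3
    intro a b s hak hbk hr
    have haP : A.perp a u := perp_of_defined hA hu
      (defined_of_le_defined hA hak (defined_of_perp hk))
    have hbP : A.perp b u := perp_of_defined hA hu
      (defined_of_le_defined hA hbk (defined_of_perp hk))
    exact (sub_le_iff Hd (⟨s, Hs haP hbP hr⟩ : {f : E | A.perp f u}) ⟨k, hk⟩).1
      (hsc.2.2.1 ⟨a, haP⟩ ⟨b, hbP⟩ ⟨s, Hs haP hbP hr⟩ ((sub_le_iff Hd _ _).2 hak)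
        ((sub_le_iff Hd _ _).2 hbk) hr)
  · -- C4
    intro a b ab hak hbk hr
    obtain ⟨a₁, a₂, ha₁, ha₂, ha⟩ := good_decomp hA hu a
    obtain ⟨b₁, b₂, hb₁, hb₂, hb⟩ := good_decomp hA hu b
    obtain ⟨sa, haks⟩ := hak
    obtain ⟨ta, ha₂k, -⟩ := as1 hA a₁ a₂ k a sa ha haks
    obtain ⟨sb, hbks⟩ := hbk
    obtain ⟨tb, hb₂k, -⟩ := as1 hA b₁ b₂ k b sb hb hbks
    obtain ⟨v, w, hv, hw, hvw⟩ := split hA hu ha hb hb₁ (defined_of_perp ha₂) hr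
    have hwP : A.perp w u := Hs ha₂ hb₂ hw
    obtain ⟨wk, hwk⟩ : A.Defined w k := (sub_def_iff Hs _ _).1
      (hsc.2.2.2 ⟨a₂, ha₂⟩ ⟨b₂, hb₂⟩ ⟨w, hwP⟩ ((sub_def_iff Hs _ _).2 ⟨ta, ha₂k⟩)
        ((sub_def_iff Hs _ _).2 ⟨tb, hb₂k⟩) hw)
    have hwkP : A.perp wk u := Hs hwP hk hwk
    have hvu : A.le v u := cC3 hu a₁ b₁ v ha₁ hb₁ hv
    obtain ⟨z, hvwk, -⟩ := cC2 hu v wk hvu (defined_of_perp hwkP)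
    obtain ⟨t, ht, htk⟩ := as2 hA v w k wk z hwk hvwk
    have : t = ab := funcR hA v w t ab ht hvw
    subst t
    exact ⟨z, htk⟩

end GPEAaux
namespace GPEAaux

open GPEApaper PartialAlg
universe w
variable {E : Type w} {A : PartialAlg E}

section DS
variable {H K : Set E} {h : E}

/-- In a direct sum with H having top h, if b ⊕ h is defined then b ∈ K. -/
theorem defined_mem_K (hA : A.IsGPEA) (hds : A.IsDirectSum H K) (hH : h ∈ H)
    (htop : ∀ a ∈ H, A.le a h) {b : E} (hdef : A.Defined b h) : b ∈ K := by
  obtain ⟨⟨hne, hdown, hsum⟩, hK, hcross, hdec⟩ := hds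
  obtain ⟨⟨b₁, b₂⟩, ⟨hb1, hb2, hb3⟩, -⟩ := hdec b
  obtain ⟨s, hbh⟩ := hdef
  obtain ⟨t, hb₂h, hb₁t⟩ := as1 hA b₁ b₂ h b s hb3 hbh
  obtain ⟨t₀, hhb₂, hb₂h'⟩ := hcross h hH b₂ hb2
  have : t₀ = t := funcR hA b₂ h t₀ t hb₂h' hb₂h
  subst t₀
  obtain ⟨s₁, hb₁h, -⟩ := as2 hA b₁ h b₂ t s hhb₂ hb₁t
  have hs₁H : s₁ ∈ H := hsum b₁ hb1 h hH s₁ hb₁h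
  have : s₁ = h := le_antisymm hA (htop s₁ hs₁H) (le_of_R_right hA hb₁h)
  subst s₁
  have hb₁0 : b₁ = A.zero := cancR hA h b₁ A.zero h hb₁h (zerR hA h).2
  subst b₁
  have : b = b₂ := funcR hA A.zero b₂ b b₂ hb3 (zerR hA b₂).2
  exact this ▸ hb2

/-- The top of the summand H is central in E. -/
theorem top_central (hA : A.IsGPEA) (hds : A.IsDirectSum H K) (hH : h ∈ H)
    (htop : ∀ a ∈ H, A.le a h) : A.Central h := by
  obtain ⟨⟨hne, hdown, hsum⟩, ⟨Kne, Kdown, Ksum⟩, hcross, hdec⟩ := hds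
  refine ⟨?_, ?_, ?_, ?_⟩
  · intro a
    obtain ⟨⟨a₁, a₂⟩, ⟨h1, h2, h3⟩, -⟩ := hdec a
    exact ⟨a₁, a₂, htop a₁ h1, defined_of_perp (perp_symm (hcross h hH a₂ h2)), h3⟩
  · intro a b hah hbh
    exact hcross a (hdown h hH a hah) b
      (defined_mem_K hA ⟨⟨hne, hdown, hsum⟩, ⟨Kne, Kdown, Ksum⟩, hcross, hdec⟩ hH htop hbh)
  · intro a b s hah hbh hr
    exact htop s (hsum a (hdown h hH a hah) b (hdown h hH b hbh) s hr)
  · intro a b ab hah hbh hr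
    have haK : a ∈ K := defined_mem_K hA ⟨⟨hne, hdown, hsum⟩, ⟨Kne, Kdown, Ksum⟩, hcross, hdec⟩ hH htop hah
    have hbK : b ∈ K := defined_mem_K hA ⟨⟨hne, hdown, hsum⟩, ⟨Kne, Kdown, Ksum⟩, hcross, hdec⟩ hH htop hbh
    exact defined_of_perp (perp_symm (hcross h hH ab (Ksum a haK b hbK ab hr)))

/-- H = E[0,h]. -/
theorem H_eq (hds : A.IsDirectSum H K) (hH : h ∈ H) (htop : ∀ a ∈ H, A.le a h) :
    H = {a : E | A.le a h} := by
  ext a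
  exact ⟨fun ha => htop a ha, fun ha => hds.1.2.1 h hH a ha⟩

/-- K = {f : f ⊥ h}. -/
theorem K_eq (hA : A.IsGPEA) (hds : A.IsDirectSum H K) (hH : h ∈ H)
    (htop : ∀ a ∈ H, A.le a h) (hch : A.Central h) : K = {f : E | A.perp f h} := by
  ext f
  constructor
  · intro hf
    exact perp_symm (hds.2.2.1 h hH f hf)
  · intro hf
    obtain ⟨⟨f₁, f₂⟩, ⟨hf1, hf2, hf3⟩, -⟩ := hds.2.2.2 f
    have hf₁h : A.Defined f₁ h :=
      defined_of_le_defined hA (le_of_R_left hf3) (defined_of_perp hf)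
    have hf₁0 : f₁ = A.zero := central_le_perp_zero hA hch (htop f₁ hf1) hf₁h
    subst f₁
    have : f = f₂ := funcR hA A.zero f₂ f f₂ hf3 (zerR hA f₂).2
    exact this ▸ hf2

/-- Any element of K below u lies below the K-part of u. -/
theorem mem_K_le_u₂ (hA : A.IsGPEA) (hds : A.IsDirectSum H K) {u u₁ u₂ : E}
    (hu1 : u₁ ∈ H) (hu2 : u₂ ∈ K) (hud : A.R u₁ u₂ u) {k : E} (hkK : k ∈ K)
    (hku : A.le k u) : A.le k u₂ := by
  obtain ⟨⟨hne, hdown, hsum⟩, ⟨Kne, Kdown, Ksum⟩, hcross, hdec⟩ := hds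
  obtain ⟨w, hkw⟩ := hku
  obtain ⟨⟨w₁, w₂⟩, ⟨hw1, hw2, hw3⟩, -⟩ := hdec w
  obtain ⟨t, hkw₁, htw₂⟩ := as2 hA k w₁ w₂ w u hw3 hkw
  obtain ⟨t₀, hw₁k, hkw₁'⟩ := hcross w₁ hw1 k hkK
  have : t₀ = t := funcR hA k w₁ t₀ t hkw₁' hkw₁
  subst t₀
  obtain ⟨m, hkw₂, hw₁m⟩ := as1 hA w₁ k w₂ t u hw₁k htw₂
  have hmK : m ∈ K := Ksum k hkK w₂ hw2 m hkw₂
  obtain ⟨p, hp, hup⟩ := hdec u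
  have e1 : ((u₁, u₂) : E × E) = p := hup (u₁, u₂) ⟨hu1, hu2, hud⟩
  have e2 : ((w₁, m) : E × E) = p := hup (w₁, m) ⟨hw1, hmK, hw₁m⟩
  have : m = u₂ := by
    have := e2.trans e1.symm
    exact (Prod.ext_iff.1 this).2
  exact this ▸ ⟨w₂, hkw₂⟩

end DS

end GPEAaux
namespace GPEAaux

open GPEApaper PartialAlg
universe w
variable {E : Type w} {A : PartialAlg E} {u : E} {H K : Set E} {h : E}

/-- The K-part of u is central in K. -/
theorem u2_subcentral (hA : A.IsGPEA) (hu : A.Central u) (hds : A.IsDirectSum H K)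
    (hH : h ∈ H) (htop : ∀ a ∈ H, A.le a h) {u₁ u₂ : E} (hu1 : u₁ ∈ H) (hu2 : u₂ ∈ K)
    (hud : A.R u₁ u₂ u) (hzK : A.zero ∈ K) :
    (A.restrictSet K hzK).Central ⟨u₂, hu2⟩ := by
  have hch : A.Central h := top_central hA hds hH htop
  have Kdown := hds.2.1.2.1
  have Ksum := hds.2.1.2.2
  have hcross := hds.2.2.1
  have hdec := hds.2.2.2
  have Hd : ∀ ⦃a z b : E⦄, b ∈ K → A.R a z b → z ∈ K :=
    fun a z b hb hz => Kdown b hb z (le_of_R_right hA hz)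
  have Hs : ∀ ⦃a b s : E⦄, a ∈ K → b ∈ K → A.R a b s → s ∈ K :=
    fun a b s ha hb hr => Ksum a ha b hb s hr
  obtain ⟨s₀, hu₁u₂, hu₂u₁⟩ := hcross u₁ hu1 u₂ hu2
  have : s₀ = u := funcR hA u₁ u₂ s₀ u hu₁u₂ hud
  subst s₀
  have hu₂u : A.le u₂ u := ⟨u₁, hu₂u₁⟩
  have defu : ∀ b t : E, b ∈ K → A.R b u₂ t → A.Defined b u := by
    intro b t hbK hbu₂
    have htK : t ∈ K := Hs hbK hu2 hbu₂
    obtain ⟨s, hu₁t, htu₁⟩ := hcross u₁ hu1 t htK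
    obtain ⟨m, hm, hbm⟩ := as1 hA b u₂ u₁ t s hbu₂ htu₁
    have : m = u := funcR hA u₂ u₁ m u hm hu₂u₁
    subst m
    exact ⟨s, hbm⟩
  refine ⟨?_, ?_, ?_, ?_⟩
  · -- C1
    rintro ⟨a, haK⟩
    obtain ⟨a₁, a₂, ha₁u, ha₂p, ha⟩ := good_decomp hA hu a
    obtain ⟨⟨x, y⟩, ⟨hx, hy, hxy⟩, -⟩ := hdec a₁
    have hxh : A.Defined x h :=
      defined_of_le_defined hA (le_trans hA (le_of_R_left hxy) (le_of_R_left ha))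
        (defined_of_perp (perp_symm (hcross h hH a haK)))
    have hx0 : x = A.zero := central_le_perp_zero hA hch (htop x hx) hxh
    subst x
    have ha₁y : a₁ = y := funcR hA A.zero y a₁ y hxy (zerR hA y).2
    have ha₁K : a₁ ∈ K := ha₁y ▸ hy
    have ha₁u₂ : A.le a₁ u₂ := mem_K_le_u₂ hA hds hu1 hu2 hud ha₁K ha₁u
    have ha₂K : a₂ ∈ K := Kdown a haK a₂ (le_of_R_right hA ha)
    obtain ⟨s, ha₂u⟩ := defined_of_perp ha₂p
    obtain ⟨t, ha₂u₂, -⟩ := as2 hA a₂ u₂ u₁ u s hu₂u₁ ha₂u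
    exact ⟨⟨a₁, ha₁K⟩, ⟨a₂, ha₂K⟩, (sub_le_iff Hd _ _).2 ha₁u₂,
      (sub_def_iff Hs _ _).2 ⟨t, ha₂u₂⟩, ha⟩
  · -- C2
    rintro ⟨a, haK⟩ ⟨b, hbK⟩ hle hdef
    have hau₂ : A.le a u₂ := (sub_le_iff Hd _ _).1 hle
    have hau : A.le a u := le_trans hA hau₂ hu₂u
    obtain ⟨t, hbu₂⟩ := (sub_def_iff Hs _ _).1 hdef
    have hbu : A.Defined b u := defu b t hbK hbu₂
    exact (sub_perp_iff Hs _ _).2 (cC2 hu a b hau hbu)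
  · -- C3
    rintro ⟨a, haK⟩ ⟨b, hbK⟩ ⟨s, hsK⟩ hale hble hr
    have hau : A.le a u := le_trans hA ((sub_le_iff Hd _ _).1 hale) hu₂u
    have hbu : A.le b u := le_trans hA ((sub_le_iff Hd _ _).1 hble) hu₂u
    have hsu : A.le s u := cC3 hu a b s hau hbu hr
    exact (sub_le_iff Hd _ _).2 (mem_K_le_u₂ hA hds hu1 hu2 hud hsK hsu)
  · -- C4
    rintro ⟨a, haK⟩ ⟨b, hbK⟩ ⟨ab, habK⟩ hadef hbdef hr
    obtain ⟨ta, hau₂⟩ := (sub_def_iff Hs _ _).1 hadef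
    obtain ⟨tb, hbu₂⟩ := (sub_def_iff Hs _ _).1 hbdef
    obtain ⟨s, habu⟩ := cC4 hu a b ab (defu a ta haK hau₂) (defu b tb hbK hbu₂) hr
    obtain ⟨t, habu₂, -⟩ := as2 hA ab u₂ u₁ u s hu₂u₁ habu
    exact (sub_def_iff Hs _ _).2 ⟨t, habu₂⟩

end GPEAaux

open GPEApaper PartialAlg in
/-- Theorem 5.12: u the largest element of Γ(E) in a COGPEA E.
(i) E = E[0,u] ⊕ {f : f ⊥ u} and {f : f ⊥ u} = {e ⊖ (u ∧ e) : e ∈ E};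
(ii) the center of the PEA E[0,u] is Γ(E), and {f : f ⊥ u} is centerless;
(iii) if E = H ⊕ K with H a PEA (having a greatest element) and K centerless,
then H = E[0,u] and K = {f : f ⊥ u}. -/
theorem stmt_14 {E : Type u} (A : PartialAlg E) (hA : A.IsGPEA)
    (hCO : A.IsCOGPEA) (u : E) (hu : A.Central u)
    (hmax : ∀ c : E, A.Central c → A.le c u) :
    -- (i)
    (A.IsDirectSum {a : E | A.le a u} {f : E | A.perp f u} ∧
      {f : E | A.perp f u} =
        {x : E | ∃ e m : E, A.IsInf {u, e} m ∧ A.R m x e ∧ A.R x m e}) ∧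
    -- (ii) the center of E[0,u] is Γ(E) ...
    (∃ h0 : A.zero ∈ {a : E | A.le a u},
      ∀ (c : E) (hc : A.le c u),
        ((A.restrictSet {a : E | A.le a u} h0).Central ⟨c, hc⟩ ↔ A.Central c)) ∧
    -- ... and the complementary summand {f : f ⊥ u} is centerless
    (∃ hz : A.zero ∈ {f : E | A.perp f u},
      ∀ (k : E) (hk : A.perp k u),
        (A.restrictSet {f : E | A.perp f u} hz).Central ⟨k, hk⟩ → k = A.zero) ∧
    -- (iii)
    (∀ H K : Set E, A.IsDirectSum H K →
      (∃ h ∈ H, ∀ a ∈ H, A.le a h) →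
      (∀ hzK : A.zero ∈ K, ∀ (k : E) (hk : k ∈ K),
        (A.restrictSet K hzK).Central ⟨k, hk⟩ → k = A.zero) →
      H = {a : E | A.le a u} ∧ K = {f : E | A.perp f u}) := by
  refine ⟨⟨GPEAaux.directSum_i hA hu, GPEAaux.setEq_i hA hu⟩,
    ⟨GPEAaux.zero_le hA u, fun c hc =>
      ⟨fun hsub => GPEAaux.central_of_sub hA hu hc hsub,
       fun hcen => GPEAaux.central_to_sub hA hu hc hcen⟩⟩,
    ⟨GPEAaux.perp_zero hA u, fun k hk hsub =>
      GPEAaux.central_le_perp_zero hA hu (hmax k (GPEAaux.central_of_sub' hA hu hk hsub))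
        (GPEAaux.defined_of_perp hk)⟩, ?_⟩
  rintro H K hds ⟨h, hH, htop⟩ hKcl
  have hch : A.Central h := GPEAaux.top_central hA hds hH htop
  have hhu : A.le h u := hmax h hch
  obtain ⟨⟨u₁, u₂⟩, ⟨hu1, hu2, hud⟩, -⟩ := hds.2.2.2 u
  obtain ⟨a₀, ha₀⟩ := hds.2.1.1
  have h0K : A.zero ∈ K := hds.2.1.2.1 a₀ ha₀ A.zero (GPEAaux.zero_le hA a₀)
  have hu₂0 : u₂ = A.zero := hKcl h0K u₂ hu2
    (GPEAaux.u2_subcentral hA hu hds hH htop hu1 hu2 hud h0K)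
  subst u₂
  have huu₁ : u = u₁ := GPEAaux.funcR hA u₁ A.zero u u₁ hud (GPEAaux.zerR hA u₁).1
  have huH : u ∈ H := huu₁ ▸ hu1
  have hhueq : h = u := GPEAaux.le_antisymm hA hhu (htop u huH)
  subst h
  exact ⟨GPEAaux.H_eq hds huH htop, GPEAaux.K_eq hA hds huH htop hch⟩
end
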